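/- arXiv:2508.18157 — 8 statements merged into one kernel-verified Lean document; each statement's English description precedes it below -/
import Mathlib

section
/- For matching with replacement with M matches per unit, the following exact finite-sample identity holds: Σ_{i=1}^N (Ŷᵢ¹ − Ŷᵢ⁰) = Σ_{i=1}^N (2Aᵢ − 1)·(1 + K_M(i)/M)·Yᵢ, where K_M(i) = Σ_{l=1}^N 𝟙{i ∈ 𝒥_M(l)} is the number of times unit i is used as a match. -/
/-- For matching with replacement with `M` matches per unit, the exact
finite-sample identity
`∑ i (Ŷᵢ¹ − Ŷᵢ⁰) = ∑ i (2Aᵢ − 1)·(1 + K_M(i)/M)·Yᵢ` holds, where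
`K_M(i) = ∑_l 𝟙{i ∈ 𝒥_M(l)}` is the number of times unit `i` is used as a match. -/
theorem matching_weighting_identity
    (N M : ℕ) (hM : 1 ≤ M)
    (Y A : Fin N → ℝ) (hA01 : ∀ i, A i = 0 ∨ A i = 1)
    (J : Fin N → Finset (Fin N))
    (hJcard : ∀ i, (J i).card = M)
    (hJopp : ∀ i, ∀ j ∈ J i, A j = 1 - A i) :
    ∑ i, ((if A i = 1 then Y i else (M : ℝ)⁻¹ * ∑ j ∈ J i, Y j)
        - (if A i = 0 then Y i else (M : ℝ)⁻¹ * ∑ j ∈ J i, Y j))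
      = ∑ i, (2 * A i - 1)
          * (1 + ((Finset.univ.filter (fun l => i ∈ J l)).card : ℝ) / (M : ℝ)) * Y i := by
  have hM0 : (M : ℝ) ≠ 0 := by positivity
  have key : ∀ i, ((if A i = 1 then Y i else (M : ℝ)⁻¹ * ∑ j ∈ J i, Y j)
        - (if A i = 0 then Y i else (M : ℝ)⁻¹ * ∑ j ∈ J i, Y j))
      = (2 * A i - 1) * Y i - (2 * A i - 1) * ((M : ℝ)⁻¹ * ∑ j ∈ J i, Y j) := by
    intro i
    rcases hA01 i with h | h <;> simp [h] <;> ring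
  have count : ∀ g : Fin N → ℝ, (∑ i, ∑ j ∈ J i, g j)
      = ∑ j, ((Finset.univ.filter (fun l => j ∈ J l)).card : ℝ) * g j := by
    intro g
    have h1 : ∀ i, ∑ j ∈ J i, g j = ∑ j, if j ∈ J i then g j else 0 := by
      intro i
      rw [Finset.sum_ite_mem, Finset.univ_inter]
    simp_rw [h1]
    rw [Finset.sum_comm]
    refine Finset.sum_congr rfl fun j _ => ?_
    rw [← Finset.sum_filter, Finset.sum_const, nsmul_eq_mul]
  have step : ∑ i, (2 * A i - 1) * ((M : ℝ)⁻¹ * ∑ j ∈ J i, Y j)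
      = ∑ i, ∑ j ∈ J i, -((2 * A j - 1) * ((M : ℝ)⁻¹ * Y j)) := by
    refine Finset.sum_congr rfl fun i _ => ?_
    rw [Finset.mul_sum, Finset.mul_sum]
    refine Finset.sum_congr rfl fun j hj => ?_
    have := hJopp i j hj
    have hAi : A i = 1 - A j := by linarith
    rw [hAi]; ring
  simp_rw [key]
  rw [Finset.sum_sub_distrib, step, count (fun j => -((2 * A j - 1) * ((M : ℝ)⁻¹ * Y j)))]
  rw [← Finset.sum_sub_distrib]
  refine Finset.sum_congr rfl fun i _ => ?_
  field_simp
  ring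
end

section
/- Inverse probability weighting representation of the GATE (equation behind the IPW estimator): under unconfoundedness and strict overlap, E[ A·Y/π(X) − (1−A)·Y/(1 − π(X)) | σ(Z) ] = E[Y1 − Y0 | σ(Z)] almost surely. -/
/-!
Conditionally on `σ(X)`, unconfoundedness makes the treatment `A` independent of each potential
outcome, so `E[A·Y₁ | X] = π(X)·E[Y₁ | X]`; dividing by the `σ(X)`-measurable propensity `π(X)`,
which overlap keeps away from `0`, gives `E[A·Y/π(X) | X] = E[Y₁ | X]`, and likewise
`E[(1 - A)·Y/(1 - π(X)) | X] = E[Y₀ | X]`. The tower property passes from `σ(X)` to `σ(Z) ⊆ σ(X)`.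
-/

open MeasureTheory ProbabilityTheory

section

variable {Ω : Type*} {m m' mΩ : MeasurableSpace Ω} {μ : Measure Ω}

lemma MeasureTheory.Integrable.div_of_le_ae {f p : Ω → ℝ} {δ : ℝ} (hf : Integrable f μ)
    (hp : AEMeasurable p μ) (hδ : 0 < δ) (hδp : ∀ᵐ ω ∂μ, δ ≤ p ω) :
    Integrable (fun ω => f ω / p ω) μ := by
  have hbound : ∀ᵐ ω ∂μ, ‖(p ω)⁻¹‖ ≤ δ⁻¹ := by
    filter_upwards [hδp] with ω hω
    rw [norm_inv, Real.norm_of_nonneg (hδ.le.trans hω)]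
    exact inv_anti₀ hδ hω
  simpa only [div_eq_inv_mul, Pi.inv_apply] using hf.bdd_mul hp.inv.aestronglyMeasurable hbound

lemma MeasureTheory.condExp_ae_eq_of_le_of_condExp_ae_eq [IsFiniteMeasure μ] (hm : m ≤ m')
    (hm' : m' ≤ mΩ) {f g : Ω → ℝ} (hfg : μ[f | m'] =ᵐ[μ] μ[g | m']) :
    μ[f | m] =ᵐ[μ] μ[g | m] :=
  (condExp_condExp_of_le hm hm').symm.trans
    ((condExp_congr_ae hfg).trans (condExp_condExp_of_le hm hm'))

variable [StandardBorelSpace Ω] [IsFiniteMeasure μ] {hm' : m' ≤ mΩ}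

lemma ProbabilityTheory.CondIndepFun.ae_indepFun_condExpKernel {β β' : Type*}
    {mβ : MeasurableSpace β} {mβ' : MeasurableSpace β'}
    [MeasurableSpace.CountableOrCountablyGenerated Ω (β × β')]
    {f : Ω → β} {g : Ω → β'} (hf : Measurable f) (hg : Measurable g)
    (hfg : CondIndepFun m' hm' f g μ) :
    ∀ᵐ ω ∂μ, f ⟂ᵢ[condExpKernel μ m' ω] g := by
  filter_upwards [ae_of_ae_trim hm' ((condIndepFun_iff_map_prod_eq_prod_map_map hf hg).1 hfg)]
    with ω hω
  rw [indepFun_iff_map_prod_eq_prod_map_map hf.aemeasurable hg.aemeasurable]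
  simpa only [Kernel.map_apply _ (hf.prodMk hg), Kernel.prod_apply, Kernel.map_apply _ hf,
    Kernel.map_apply _ hg] using hω

lemma ProbabilityTheory.CondIndepFun.condExp_mul {f g : Ω → ℝ} (hf : Measurable f)
    (hg : Measurable g) (hfi : Integrable f μ) (hgi : Integrable g μ)
    (hfgi : Integrable (f * g) μ) (hfg : CondIndepFun m' hm' f g μ) :
    μ[f * g | m'] =ᵐ[μ] μ[f | m'] * μ[g | m'] := by
  filter_upwards [condExp_ae_eq_integral_condExpKernel hm' hfgi,
    condExp_ae_eq_integral_condExpKernel hm' hfi, condExp_ae_eq_integral_condExpKernel hm' hgi,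
    hfg.ae_indepFun_condExpKernel hf hg] with ω hfg_eq hf_eq hg_eq hindep
  rw [Pi.mul_apply, hfg_eq, hf_eq, hg_eq]
  exact hindep.integral_mul_eq_mul_integral hf.aestronglyMeasurable hg.aestronglyMeasurable

lemma ProbabilityTheory.CondIndepFun.condExp_mul_div_ae_eq_condExp {A Y p : Ω → ℝ} {δ : ℝ}
    (hA : Measurable A) (hY : Measurable Y) (hAi : Integrable A μ) (hYi : Integrable Y μ)
    (hAYi : Integrable (A * Y) μ) (hAY : CondIndepFun m' hm' A Y μ)
    (hp : μ[A | m'] =ᵐ[μ] p) (hpm : StronglyMeasurable[m'] p) (hδ : 0 < δ)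
    (hδp : ∀ᵐ ω ∂μ, δ ≤ p ω) :
    μ[fun ω => A ω * Y ω / p ω | m'] =ᵐ[μ] μ[Y | m'] := by
  have hfun : (fun ω => A ω * Y ω / p ω) = p⁻¹ * (A * Y) := by
    ext ω
    simp only [Pi.mul_apply, Pi.inv_apply, div_eq_inv_mul]
  have hpull : μ[p⁻¹ * (A * Y) | m'] =ᵐ[μ] p⁻¹ * μ[A * Y | m'] := by
    refine condExp_mul_of_stronglyMeasurable_left hpm.measurable.inv.stronglyMeasurable ?_ hAYi
    rw [← hfun]
    exact hAYi.div_of_le_ae (hpm.mono hm').measurable.aemeasurable hδ hδp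
  rw [hfun]
  filter_upwards [hpull, hAY.condExp_mul hA hY hAi hYi hAYi, hp, hδp] with ω hpullω hmulω hpω hδω
  rw [hpullω, Pi.mul_apply, hmulω, Pi.mul_apply, hpω, Pi.inv_apply,
    inv_mul_cancel_left₀ (hδ.trans_le hδω).ne']

lemma ProbabilityTheory.CondIndepFun.condExp_ipw_ae_eq_condExp_sub {A Y0 Y1 Y : Ω → ℝ} {δ : ℝ}
    (huncf : CondIndepFun m' hm' A (fun ω => (Y0 ω, Y1 ω)) μ) (hAm : Measurable A)
    (hA01 : ∀ ω, A ω = 0 ∨ A ω = 1) (hY0m : Measurable Y0) (hY1m : Measurable Y1)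
    (hY0i : Integrable Y0 μ) (hY1i : Integrable Y1 μ)
    (hYdef : ∀ ω, Y ω = A ω * Y1 ω + (1 - A ω) * Y0 ω) (hδ : 0 < δ)
    (hover : ∀ᵐ ω ∂μ, δ ≤ μ[A | m'] ω ∧ μ[A | m'] ω ≤ 1 - δ) :
    μ[fun ω => A ω * Y ω / μ[A | m'] ω - (1 - A ω) * Y ω / (1 - μ[A | m'] ω) | m']
      =ᵐ[μ] μ[fun ω => Y1 ω - Y0 ω | m'] := by
  set π := μ[A | m']
  have hA_bdd : ∀ ω, ‖A ω‖ ≤ 1 := fun ω => by rcases hA01 ω with h | h <;> simp [h]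
  have hA_compl_bdd : ∀ ω, ‖1 - A ω‖ ≤ 1 := fun ω => by rcases hA01 ω with h | h <;> simp [h]
  have hAi : Integrable A μ := .of_bound hAm.aestronglyMeasurable 1 (.of_forall hA_bdd)
  have hAY1i : Integrable (A * Y1) μ := hY1i.bdd_mul hAm.aestronglyMeasurable (.of_forall hA_bdd)
  have hAY0i : Integrable ((1 - A) * Y0) μ :=
    hY0i.bdd_mul (measurable_const.sub hAm).aestronglyMeasurable (.of_forall hA_compl_bdd)
  have hπm : StronglyMeasurable[m'] π := stronglyMeasurable_condExp
  have hπ_compl_m : StronglyMeasurable[m'] (1 - π) := stronglyMeasurable_const.sub hπm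
  have hπ_ge : ∀ᵐ ω ∂μ, δ ≤ π ω := hover.mono fun _ h => h.1
  have hπ_compl_ge : ∀ᵐ ω ∂μ, δ ≤ 1 - π ω := hover.mono fun _ h => by linarith [h.2]
  have hπ_compl : μ[1 - A | m'] =ᵐ[μ] 1 - π :=
    (condExp_sub (integrable_const 1) hAi m').trans (by rw [condExp_const hm']; rfl)
  have htreated : μ[fun ω => A ω * Y1 ω / π ω | m'] =ᵐ[μ] μ[Y1 | m'] :=
    (huncf.comp measurable_id measurable_snd).condExp_mul_div_ae_eq_condExp hAm hY1m hAi hY1i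
      hAY1i .rfl hπm hδ hπ_ge
  have hcontrol : μ[fun ω => (1 - A ω) * Y0 ω / (1 - π ω) | m'] =ᵐ[μ] μ[Y0 | m'] :=
    (huncf.comp (measurable_const.sub measurable_id) measurable_fst).condExp_mul_div_ae_eq_condExp
      (measurable_const.sub hAm) hY0m ((integrable_const 1).sub hAi) hY0i hAY0i hπ_compl
      hπ_compl_m hδ hπ_compl_ge
  have hipw : (fun ω => A ω * Y ω / π ω - (1 - A ω) * Y ω / (1 - π ω))
      = (fun ω => A ω * Y1 ω / π ω) - fun ω => (1 - A ω) * Y0 ω / (1 - π ω) := by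
    funext ω
    rcases hA01 ω with h | h <;> simp [hYdef, h]
  calc μ[fun ω => A ω * Y ω / π ω - (1 - A ω) * Y ω / (1 - π ω) | m']
      = μ[(fun ω => A ω * Y1 ω / π ω) - fun ω => (1 - A ω) * Y0 ω / (1 - π ω) | m'] := by
        rw [hipw]
    _ =ᵐ[μ] μ[fun ω => A ω * Y1 ω / π ω | m'] - μ[fun ω => (1 - A ω) * Y0 ω / (1 - π ω) | m'] :=
        condExp_sub (hAY1i.div_of_le_ae (hπm.mono hm').measurable.aemeasurable hδ hπ_ge)
          (hAY0i.div_of_le_ae (hπ_compl_m.mono hm').measurable.aemeasurable hδ hπ_compl_ge) m'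
    _ =ᵐ[μ] μ[Y1 | m'] - μ[Y0 | m'] := htreated.sub hcontrol
    _ =ᵐ[μ] μ[Y1 - Y0 | m'] := (condExp_sub hY1i hY0i m').symm

end

theorem ipw_representation_of_gate_general
    {Ω : Type*} [MeasurableSpace Ω] [StandardBorelSpace Ω]
    {S : Type*} [MeasurableSpace S]
    (μ : Measure Ω) [IsProbabilityMeasure μ]
    (A : Ω → ℝ) (hAm : Measurable A) (hA01 : ∀ ω, A ω = 0 ∨ A ω = 1)
    (X : Ω → S) (hXm : Measurable X)
    (Y0 Y1 : Ω → ℝ) (hY0m : Measurable Y0) (hY1m : Measurable Y1)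
    (hY0i : Integrable Y0 μ) (hY1i : Integrable Y1 μ)
    (Y : Ω → ℝ) (hYdef : ∀ ω, Y ω = A ω * Y1 ω + (1 - A ω) * Y0 ω)
    (huncf : CondIndepFun (MeasurableSpace.comap X inferInstance) (hXm.comap_le)
      A (fun ω => (Y0 ω, Y1 ω)) μ)
    (δ : ℝ) (hδ0 : 0 < δ)
    (hover : ∀ᵐ ω ∂μ, δ ≤ (μ[A | MeasurableSpace.comap X inferInstance]) ω
      ∧ (μ[A | MeasurableSpace.comap X inferInstance]) ω ≤ 1 - δ)
    (g : S → ℝ) (hg : Measurable g) :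
    μ[fun ω =>
        A ω * Y ω / (μ[A | MeasurableSpace.comap X inferInstance]) ω
        - (1 - A ω) * Y ω / (1 - (μ[A | MeasurableSpace.comap X inferInstance]) ω)
      | MeasurableSpace.comap (fun ω => g (X ω)) inferInstance]
      =ᵐ[μ]
    μ[fun ω => Y1 ω - Y0 ω
      | MeasurableSpace.comap (fun ω => g (X ω)) inferInstance] := by
  refine condExp_ae_eq_of_le_of_condExp_ae_eq (hg.comp (comap_measurable X)).comap_le
    hXm.comap_le ?_
  exact huncf.condExp_ipw_ae_eq_condExp_sub hAm hA01 hY0m hY1m hY0i hY1i hYdef hδ0 hover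

/-- Inverse probability weighting representation of the GATE: under
unconfoundedness and strict overlap,
`E[ A·Y/π(X) − (1−A)·Y/(1 − π(X)) | σ(Z) ] = E[Y1 − Y0 | σ(Z)]` a.s.,
where `π(X) = E[A | σ(X)]`, `Y = A·Y1 + (1−A)·Y0` and `Z = g ∘ X`. -/
theorem ipw_representation_of_gate
    {Ω : Type*} [MeasurableSpace Ω] [StandardBorelSpace Ω]
    {S : Type*} [MeasurableSpace S]
    (μ : Measure Ω) [IsProbabilityMeasure μ]
    (A : Ω → ℝ) (hAm : Measurable A) (hA01 : ∀ ω, A ω = 0 ∨ A ω = 1)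
    (X : Ω → S) (hXm : Measurable X)
    (Y0 Y1 : Ω → ℝ) (hY0m : Measurable Y0) (hY1m : Measurable Y1)
    (hY0i : Integrable Y0 μ) (hY1i : Integrable Y1 μ)
    (Y : Ω → ℝ) (hYdef : ∀ ω, Y ω = A ω * Y1 ω + (1 - A ω) * Y0 ω)
    (huncf : CondIndepFun (MeasurableSpace.comap X inferInstance) (hXm.comap_le)
      A (fun ω => (Y0 ω, Y1 ω)) μ)
    (δ : ℝ) (hδ0 : 0 < δ) (hδhalf : δ < 1 / 2)
    (hover : ∀ᵐ ω ∂μ, δ ≤ (μ[A | MeasurableSpace.comap X inferInstance]) ω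
      ∧ (μ[A | MeasurableSpace.comap X inferInstance]) ω ≤ 1 - δ)
    (g : S → ℝ) (hg : Measurable g) :
    μ[fun ω =>
        A ω * Y ω / (μ[A | MeasurableSpace.comap X inferInstance]) ω
        - (1 - A ω) * Y ω / (1 - (μ[A | MeasurableSpace.comap X inferInstance]) ω)
      | MeasurableSpace.comap (fun ω => g (X ω)) inferInstance]
      =ᵐ[μ]
    μ[fun ω => Y1 ω - Y0 ω
      | MeasurableSpace.comap (fun ω => g (X ω)) inferInstance] :=
  ipw_representation_of_gate_general μ A hAm hA01 X hXm Y0 Y1 hY0m hY1m hY0i hY1i Y hYdef huncf δ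
    hδ0 hover g hg
end

section
/- Augmented inverse probability weighting representation of the GATE (equation behind the AIPW estimator): under unconfoundedness and strict overlap, with μ1(X) = E[Y1 | σ(X)] and μ0(X) = E[Y0 | σ(X)], E[ A·(Y − μ1(X))/π(X) − (1−A)·(Y − μ0(X))/(1 − π(X)) + μ1(X) − μ0(X) | σ(Z) ] = E[Y1 − Y0 | σ(Z)] almost surely. -/
/-!
Conditionally on `σ(X)`, the treatment `A` is independent of `(Y0, Y1)`, so the conditional
expectation of `A · Y1` factors as `π(X) · μ1(X)` and the residual `A · (Y1 − μ1(X))` has zero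
conditional expectation given `σ(X)`; likewise for `(1 − A) · (Y0 − μ0(X))`. Overlap makes the
weights `1/π(X)` and `1/(1 − π(X))` bounded and `σ(X)`-measurable, so they can be pulled out, and
the AIPW score has conditional expectation `μ1(X) − μ0(X) = E[Y1 − Y0 | σ(X)]`. Conditioning
further on `σ(Z) ⊆ σ(X)` gives the claim by the tower property.

The factorisation comes from the regular conditional distribution: under `condExpKernel μ m ω`
the two variables are independent for almost every `ω`.
-/

open MeasureTheory ProbabilityTheory

namespace ProbabilityTheory

variable {Ω : Type*} {m mΩ : MeasurableSpace Ω} {μ : Measure Ω} [IsFiniteMeasure μ]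

section CondIndepFun

variable [StandardBorelSpace Ω] {hm : m ≤ mΩ}

theorem CondIndepFun.ae_indepFun_condExpKernel_s6 {β β' : Type*} {mβ : MeasurableSpace β}
    {mβ' : MeasurableSpace β'} [MeasurableSpace.CountableOrCountablyGenerated Ω (β × β')]
    {f : Ω → β} {g : Ω → β'} (hf : Measurable f) (hg : Measurable g)
    (h : CondIndepFun m hm f g μ) :
    ∀ᵐ ω ∂μ, f ⟂ᵢ[condExpKernel μ m ω] g := by
  rw [condIndepFun_iff_map_prod_eq_prod_map_map hf hg] at h
  filter_upwards [ae_of_ae_trim hm h] with ω hω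
  rw [Kernel.map_apply _ (hf.prodMk hg), Kernel.prod_apply, Kernel.map_apply _ hf,
    Kernel.map_apply _ hg] at hω
  exact (indepFun_iff_map_prod_eq_prod_map_map hf.aemeasurable hg.aemeasurable).2 hω

theorem CondIndepFun.condExp_mul_s6 {f g : Ω → ℝ} (hf : Measurable f) (hg : Measurable g)
    (h : CondIndepFun m hm f g μ) (hfi : Integrable f μ) (hgi : Integrable g μ)
    (hfgi : Integrable (f * g) μ) :
    μ[f * g|m] =ᵐ[μ] μ[f|m] * μ[g|m] := by
  filter_upwards [condExp_ae_eq_integral_condExpKernel hm hfgi,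
    condExp_ae_eq_integral_condExpKernel hm hfi, condExp_ae_eq_integral_condExpKernel hm hgi,
    h.ae_indepFun_condExpKernel_s6 hf hg] with ω hfg hf' hg' hind
  rw [Pi.mul_apply, hfg, hf', hg']
  exact hind.integral_mul_eq_mul_integral hf.aestronglyMeasurable hg.aestronglyMeasurable

theorem CondIndepFun.condExp_mul_sub_condExp {B V : Ω → ℝ} (hB : Measurable B)
    (hV : Measurable V) (h : CondIndepFun m hm B V μ) {C : ℝ} (hBC : ∀ᵐ ω ∂μ, ‖B ω‖ ≤ C)
    (hVi : Integrable V μ) :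
    μ[B * (V - μ[V|m])|m] =ᵐ[μ] 0 := by
  have hBi : Integrable B μ := .of_bound hB.aestronglyMeasurable C hBC
  have hBV : Integrable (B * V) μ := hVi.bdd_mul hB.aestronglyMeasurable hBC
  have hκB : Integrable (μ[V|m] * B) μ := integrable_condExp.mul_bdd hB.aestronglyMeasurable hBC
  have hpull : μ[μ[V|m] * B|m] =ᵐ[μ] μ[V|m] * μ[B|m] :=
    condExp_mul_of_stronglyMeasurable_left stronglyMeasurable_condExp hκB hBi
  calc μ[B * (V - μ[V|m])|m] = μ[B * V - μ[V|m] * B|m] := by rw [mul_sub, mul_comm B (μ[V|m])]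
    _ =ᵐ[μ] μ[B * V|m] - μ[μ[V|m] * B|m] := condExp_sub hBV hκB m
    _ =ᵐ[μ] μ[B|m] * μ[V|m] - μ[V|m] * μ[B|m] := (h.condExp_mul_s6 hB hV hBi hVi hBV).sub hpull
    _ = 0 := by rw [mul_comm, sub_self]

end CondIndepFun

theorem condExp_stronglyMeasurable_mul_eq_zero (hm : m ≤ mΩ) {r U : Ω → ℝ}
    (hr : StronglyMeasurable[m] r) {c : ℝ} (hrc : ∀ᵐ ω ∂μ, ‖r ω‖ ≤ c) (hU : Integrable U μ)
    (hU0 : μ[U|m] =ᵐ[μ] 0) :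
    μ[r * U|m] =ᵐ[μ] 0 := by
  filter_upwards [condExp_stronglyMeasurable_mul_of_bound hm hr hU c hrc, hU0] with ω h h0
  rw [h, Pi.mul_apply, h0, Pi.zero_apply, mul_zero]

theorem condExp_aipw_ae_eq [StandardBorelSpace Ω] (hm : m ≤ mΩ) {A Y0 Y1 Y : Ω → ℝ}
    (hAm : Measurable A) (hA01 : ∀ ω, A ω = 0 ∨ A ω = 1) (hY0m : Measurable Y0)
    (hY1m : Measurable Y1) (hY0i : Integrable Y0 μ) (hY1i : Integrable Y1 μ)
    (hYdef : ∀ ω, Y ω = A ω * Y1 ω + (1 - A ω) * Y0 ω)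
    (hindep : CondIndepFun m hm A (fun ω => (Y0 ω, Y1 ω)) μ) {δ : ℝ} (hδ0 : 0 < δ)
    (hover : ∀ᵐ ω ∂μ, δ ≤ (μ[A|m]) ω ∧ (μ[A|m]) ω ≤ 1 - δ) :
    μ[fun ω => A ω * (Y ω - (μ[Y1|m]) ω) / (μ[A|m]) ω
        - (1 - A ω) * (Y ω - (μ[Y0|m]) ω) / (1 - (μ[A|m]) ω)
        + (μ[Y1|m]) ω - (μ[Y0|m]) ω | m]
      =ᵐ[μ] μ[Y1 - Y0|m] := by
  set π := μ[A|m]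
  have hπ : StronglyMeasurable[m] π := stronglyMeasurable_condExp
  have hπ1 : StronglyMeasurable[m] π⁻¹ := hπ.measurable.inv.stronglyMeasurable
  have hπ0 : StronglyMeasurable[m] (1 - π)⁻¹ :=
    (measurable_const.sub hπ.measurable).inv.stronglyMeasurable
  have hw1 : ∀ᵐ ω ∂μ, ‖π⁻¹ ω‖ ≤ δ⁻¹ := by
    filter_upwards [hover] with ω h
    rw [Pi.inv_apply, norm_inv, Real.norm_of_nonneg (by linarith)]
    exact inv_anti₀ hδ0 h.1
  have hw0 : ∀ᵐ ω ∂μ, ‖(1 - π)⁻¹ ω‖ ≤ δ⁻¹ := by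
    filter_upwards [hover] with ω h
    rw [Pi.inv_apply, Pi.sub_apply, Pi.one_apply, norm_inv, Real.norm_of_nonneg (by linarith)]
    exact inv_anti₀ hδ0 (by linarith)
  have hA : ∀ ω, ‖A ω‖ ≤ 1 := fun ω => by rcases hA01 ω with h | h <;> simp [h]
  have hA' : ∀ ω, ‖(1 - A) ω‖ ≤ 1 := fun ω => by rcases hA01 ω with h | h <;> simp [h]
  have hU1 : Integrable (A * (Y1 - μ[Y1|m])) μ :=
    (hY1i.sub integrable_condExp).bdd_mul hAm.aestronglyMeasurable (ae_of_all _ hA)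
  have hU0 : Integrable ((1 - A) * (Y0 - μ[Y0|m])) μ :=
    (hY0i.sub integrable_condExp).bdd_mul (measurable_const.sub hAm).aestronglyMeasurable
      (ae_of_all _ hA')
  have hres1 : μ[A * (Y1 - μ[Y1|m])|m] =ᵐ[μ] 0 :=
    (hindep.comp measurable_id measurable_snd).condExp_mul_sub_condExp hAm hY1m
      (ae_of_all _ hA) hY1i
  have hres0 : μ[(1 - A) * (Y0 - μ[Y0|m])|m] =ᵐ[μ] 0 :=
    (hindep.comp (measurable_const.sub measurable_id) measurable_fst).condExp_mul_sub_condExp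
      (measurable_const.sub hAm) hY0m (ae_of_all _ hA') hY0i
  have hT1 : Integrable (π⁻¹ * (A * (Y1 - μ[Y1|m]))) μ :=
    hU1.bdd_mul (hπ1.mono hm).aestronglyMeasurable hw1
  have hT0 : Integrable ((1 - π)⁻¹ * ((1 - A) * (Y0 - μ[Y0|m]))) μ :=
    hU0.bdd_mul (hπ0.mono hm).aestronglyMeasurable hw0
  have hD : StronglyMeasurable[m] (μ[Y1|m] - μ[Y0|m]) :=
    stronglyMeasurable_condExp.sub stronglyMeasurable_condExp
  calc μ[fun ω => A ω * (Y ω - (μ[Y1|m]) ω) / π ω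
        - (1 - A ω) * (Y ω - (μ[Y0|m]) ω) / (1 - π ω) + (μ[Y1|m]) ω - (μ[Y0|m]) ω | m]
      = μ[π⁻¹ * (A * (Y1 - μ[Y1|m])) - (1 - π)⁻¹ * ((1 - A) * (Y0 - μ[Y0|m]))
          + (μ[Y1|m] - μ[Y0|m]) | m] := by
        congr 1
        funext ω
        simp only [Pi.add_apply, Pi.sub_apply, Pi.mul_apply, Pi.inv_apply, Pi.one_apply, hYdef]
        rcases hA01 ω with h | h <;> rw [h] <;> ring
    _ =ᵐ[μ] μ[π⁻¹ * (A * (Y1 - μ[Y1|m]))|m] - μ[(1 - π)⁻¹ * ((1 - A) * (Y0 - μ[Y0|m]))|m]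
          + μ[μ[Y1|m] - μ[Y0|m]|m] :=
        (condExp_add (hT1.sub hT0) (integrable_condExp.sub integrable_condExp) m).trans
          ((condExp_sub hT1 hT0 m).add .rfl)
    _ =ᵐ[μ] 0 - 0 + (μ[Y1|m] - μ[Y0|m]) := by
        refine ((condExp_stronglyMeasurable_mul_eq_zero hm hπ1 hw1 hU1 hres1).sub
          (condExp_stronglyMeasurable_mul_eq_zero hm hπ0 hw0 hU0 hres0)).add ?_
        rw [condExp_of_stronglyMeasurable hm hD (integrable_condExp.sub integrable_condExp)]
    _ =ᵐ[μ] μ[Y1 - Y0|m] := by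
        rw [zero_sub, neg_zero, zero_add]
        exact (condExp_sub hY1i hY0i m).symm

end ProbabilityTheory

theorem aipw_representation_of_gate_general
    {Ω : Type*} [MeasurableSpace Ω] [StandardBorelSpace Ω]
    {S : Type*} [MeasurableSpace S]
    (μ : Measure Ω) [IsProbabilityMeasure μ]
    (A : Ω → ℝ) (hAm : Measurable A) (hA01 : ∀ ω, A ω = 0 ∨ A ω = 1)
    (X : Ω → S) (hXm : Measurable X)
    (Y0 Y1 : Ω → ℝ) (hY0m : Measurable Y0) (hY1m : Measurable Y1)
    (hY0i : Integrable Y0 μ) (hY1i : Integrable Y1 μ)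
    (Y : Ω → ℝ) (hYdef : ∀ ω, Y ω = A ω * Y1 ω + (1 - A ω) * Y0 ω)
    (huncf : CondIndepFun (MeasurableSpace.comap X inferInstance) (hXm.comap_le)
      A (fun ω => (Y0 ω, Y1 ω)) μ)
    (δ : ℝ) (hδ0 : 0 < δ)
    (hover : ∀ᵐ ω ∂μ, δ ≤ (μ[A | MeasurableSpace.comap X inferInstance]) ω
      ∧ (μ[A | MeasurableSpace.comap X inferInstance]) ω ≤ 1 - δ)
    (g : S → ℝ) (hg : Measurable g) :
    μ[fun ω =>
        A ω * (Y ω - (μ[Y1 | MeasurableSpace.comap X inferInstance]) ω)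
          / (μ[A | MeasurableSpace.comap X inferInstance]) ω
        - (1 - A ω) * (Y ω - (μ[Y0 | MeasurableSpace.comap X inferInstance]) ω)
          / (1 - (μ[A | MeasurableSpace.comap X inferInstance]) ω)
        + (μ[Y1 | MeasurableSpace.comap X inferInstance]) ω
        - (μ[Y0 | MeasurableSpace.comap X inferInstance]) ω
      | MeasurableSpace.comap (fun ω => g (X ω)) inferInstance]
      =ᵐ[μ]
    μ[fun ω => Y1 ω - Y0 ω
      | MeasurableSpace.comap (fun ω => g (X ω)) inferInstance] := by
  have hZX : MeasurableSpace.comap (g ∘ X) inferInstance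
      ≤ MeasurableSpace.comap X inferInstance := by
    rw [← MeasurableSpace.comap_comp]
    exact MeasurableSpace.comap_mono hg.comap_le
  have hσX := condExp_aipw_ae_eq hXm.comap_le hAm hA01 hY0m hY1m hY0i hY1i hYdef huncf hδ0 hover
  exact (condExp_condExp_of_le hZX hXm.comap_le).symm.trans
    ((condExp_congr_ae hσX).trans (condExp_condExp_of_le hZX hXm.comap_le))

/-- AIPW representation of the GATE: under unconfoundedness and strict
overlap, with `μ1(X) = E[Y1 | σ(X)]` and `μ0(X) = E[Y0 | σ(X)]`,
`E[ A·(Y − μ1(X))/π(X) − (1−A)·(Y − μ0(X))/(1 − π(X)) + μ1(X) − μ0(X) | σ(Z) ]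
  = E[Y1 − Y0 | σ(Z)]` a.s. -/
theorem aipw_representation_of_gate
    {Ω : Type*} [MeasurableSpace Ω] [StandardBorelSpace Ω]
    {S : Type*} [MeasurableSpace S]
    (μ : Measure Ω) [IsProbabilityMeasure μ]
    (A : Ω → ℝ) (hAm : Measurable A) (hA01 : ∀ ω, A ω = 0 ∨ A ω = 1)
    (X : Ω → S) (hXm : Measurable X)
    (Y0 Y1 : Ω → ℝ) (hY0m : Measurable Y0) (hY1m : Measurable Y1)
    (hY0i : Integrable Y0 μ) (hY1i : Integrable Y1 μ)
    (Y : Ω → ℝ) (hYdef : ∀ ω, Y ω = A ω * Y1 ω + (1 - A ω) * Y0 ω)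
    (huncf : CondIndepFun (MeasurableSpace.comap X inferInstance) (hXm.comap_le)
      A (fun ω => (Y0 ω, Y1 ω)) μ)
    (δ : ℝ) (hδ0 : 0 < δ) (hδhalf : δ < 1 / 2)
    (hover : ∀ᵐ ω ∂μ, δ ≤ (μ[A | MeasurableSpace.comap X inferInstance]) ω
      ∧ (μ[A | MeasurableSpace.comap X inferInstance]) ω ≤ 1 - δ)
    (g : S → ℝ) (hg : Measurable g) :
    μ[fun ω =>
        A ω * (Y ω - (μ[Y1 | MeasurableSpace.comap X inferInstance]) ω)
          / (μ[A | MeasurableSpace.comap X inferInstance]) ω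
        - (1 - A ω) * (Y ω - (μ[Y0 | MeasurableSpace.comap X inferInstance]) ω)
          / (1 - (μ[A | MeasurableSpace.comap X inferInstance]) ω)
        + (μ[Y1 | MeasurableSpace.comap X inferInstance]) ω
        - (μ[Y0 | MeasurableSpace.comap X inferInstance]) ω
      | MeasurableSpace.comap (fun ω => g (X ω)) inferInstance]
      =ᵐ[μ]
    μ[fun ω => Y1 ω - Y0 ω
      | MeasurableSpace.comap (fun ω => g (X ω)) inferInstance] :=
  aipw_representation_of_gate_general μ A hAm hA01 X hXm Y0 Y1 hY0m hY1m hY0i hY1i Y hYdef huncf δ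
    hδ0 hover g hg
end

section
/- Double robustness of the AIPW functional, outcome-regression side: under unconfoundedness, for ANY measurable function e : S → ℝ with δ ≤ e(x) ≤ 1 − δ for all x (a possibly misspecified propensity score model), and with the TRUE conditional means μ1(X) = E[Y1 | σ(X)] and μ0(X) = E[Y0 | σ(X)], E[ A·(Y − μ1(X))/e(X) − (1−A)·(Y − μ0(X))/(1 − e(X)) + μ1(X) − μ0(X) | σ(Z) ] = E[Y1 − Y0 | σ(Z)] almost surely. -/
open MeasureTheory ProbabilityTheory

/-! Let `m = σ(X)`. Since `A` is an indicator, unconfoundedness gives the product rule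
`E[A W | m] = E[A | m] E[W | m]` for every integrable `W = φ(Y₀, Y₁)`: on each `u ∈ m`, the laws of
`W` under `1_{u ∩ {A = 1}} dμ` and under `1_u E[A | m] dμ` coincide. Hence the residuals
`A (Y₁ - μ₁(X))` and `(1 - A) (Y₀ - μ₀(X))` have zero `m`-conditional mean, and they keep it after
division by the `m`-measurable weights `e(X)`, `1 - e(X)`, whatever `e` is. So the score has
`m`-conditional mean `μ₁(X) - μ₀(X) = E[Y₁ - Y₀ | m]`, and the tower property passes this down to
`σ(Z) ⊆ m`. -/

lemma norm_inv_le_inv_of_le {δ x : ℝ} (hδ : 0 < δ) (hx : δ ≤ x) : ‖x⁻¹‖ ≤ δ⁻¹ := by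
  rw [norm_inv, Real.norm_of_nonneg (hδ.le.trans hx)]
  exact inv_anti₀ hδ hx

namespace MeasureTheory

variable {Ω : Type*} {m : MeasurableSpace Ω} [mΩ : MeasurableSpace Ω] {μ : Measure Ω}
  {R c : Ω → ℝ} {δ : ℝ}

lemma Integrable.div_of_le (hR : Integrable R μ) (hc : AEMeasurable c μ) (hδ : 0 < δ)
    (hcδ : ∀ ω, δ ≤ c ω) : Integrable (fun ω ↦ R ω / c ω) μ := by
  simpa only [div_eq_inv_mul, Pi.inv_apply] using
    hR.bdd_mul hc.inv.aestronglyMeasurable (ae_of_all _ fun ω ↦ norm_inv_le_inv_of_le hδ (hcδ ω))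

lemma Integrable.mul_of_zero_or_one {A W : Ω → ℝ} (hW : Integrable W μ)
    (hA : AEStronglyMeasurable A μ) (hA01 : ∀ ω, A ω = 0 ∨ A ω = 1) : Integrable (A * W) μ :=
  hW.bdd_mul (c := 1) hA (ae_of_all _ fun ω ↦ by rcases hA01 ω with h | h <;> simp [h])

lemma condExp_div_eq_zero [IsFiniteMeasure μ] (hm : m ≤ mΩ) (hc : Measurable[m] c) (hδ : 0 < δ)
    (hcδ : ∀ ω, δ ≤ c ω) (hRi : Integrable R μ) (hR : μ[R | m] =ᵐ[μ] 0) :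
    μ[fun ω ↦ R ω / c ω | m] =ᵐ[μ] 0 := by
  have hRc : (fun ω ↦ R ω / c ω) = c⁻¹ * R := by
    ext ω; simp [div_eq_inv_mul]
  rw [hRc]
  filter_upwards [condExp_stronglyMeasurable_mul_of_bound hm hc.inv.stronglyMeasurable hRi δ⁻¹
    (ae_of_all _ fun ω ↦ norm_inv_le_inv_of_le hδ (hcδ ω)), hR] with ω h₁ h₂
  simp [h₁, h₂]

lemma condExp_ae_eq_of_condExp_ae_eq_of_le {m₁ m₂ : MeasurableSpace Ω} (h₁₂ : m₁ ≤ m₂)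
    (h₂ : m₂ ≤ mΩ) [SigmaFinite (μ.trim h₂)] {f g : Ω → ℝ} (h : μ[f | m₂] =ᵐ[μ] μ[g | m₂]) :
    μ[f | m₁] =ᵐ[μ] μ[g | m₁] :=
  (condExp_condExp_of_le h₁₂ h₂).symm.trans
    ((condExp_congr_ae h).trans (condExp_condExp_of_le h₁₂ h₂))

end MeasureTheory

namespace ProbabilityTheory

variable {Ω : Type*} {m : MeasurableSpace Ω} [mΩ : MeasurableSpace Ω] {μ : Measure Ω}

section ProductRule

variable [StandardBorelSpace Ω] [IsFiniteMeasure μ]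

lemma condExp_indicator_one_mem_Icc (hm : m ≤ mΩ) {s : Set Ω} (hs : MeasurableSet s) :
    ∀ᵐ ω ∂μ, (μ⟦s | m⟧) ω ∈ Set.Icc 0 1 := by
  filter_upwards [condExpKernel_ae_eq_condExp hm hs] with ω hω
  rw [← hω]
  exact ⟨measureReal_nonneg, measureReal_le_one⟩

lemma norm_condExp_indicator_one_le (hm : m ≤ mΩ) {s : Set Ω} (hs : MeasurableSet s) :
    ∀ᵐ ω ∂μ, ‖(μ⟦s | m⟧) ω‖ ≤ 1 := by
  filter_upwards [condExp_indicator_one_mem_Icc hm hs] with ω hω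
  rw [Real.norm_of_nonneg hω.1]
  exact hω.2

lemma setIntegral_inter_condExp_indicator (hm : m ≤ mΩ) {s t u : Set Ω}
    (hs : MeasurableSet s) (ht : MeasurableSet t) (hu : MeasurableSet[m] u)
    (hst : μ⟦s ∩ t | m⟧ =ᵐ[μ] μ⟦s | m⟧ * μ⟦t | m⟧) :
    ∫ ω in u ∩ t, (μ⟦s | m⟧) ω ∂μ = μ.real (u ∩ (s ∩ t)) := by
  have ht_int : Integrable (t.indicator fun _ ↦ (1 : ℝ)) μ := (integrable_const 1).indicator ht
  have hpt_int : Integrable (μ⟦s | m⟧ * t.indicator fun _ ↦ (1 : ℝ)) μ :=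
    ht_int.bdd_mul integrable_condExp.aestronglyMeasurable (norm_condExp_indicator_one_le hm hs)
  have hpt : t.indicator (μ⟦s | m⟧) = μ⟦s | m⟧ * t.indicator fun _ ↦ (1 : ℝ) := by
    ext ω; by_cases h : ω ∈ t <;> simp [h]
  calc ∫ ω in u ∩ t, (μ⟦s | m⟧) ω ∂μ
      = ∫ ω in u, (μ⟦s | m⟧ * t.indicator fun _ ↦ (1 : ℝ)) ω ∂μ := by
        rw [← setIntegral_indicator ht, hpt]
    _ = ∫ ω in u, (μ⟦s | m⟧ * μ⟦t | m⟧) ω ∂μ := by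
        rw [← setIntegral_condExp hm hpt_int hu]
        exact integral_congr_ae (ae_restrict_of_ae
          (condExp_mul_of_stronglyMeasurable_left stronglyMeasurable_condExp hpt_int ht_int))
    _ = ∫ ω in u, (s ∩ t).indicator (fun _ ↦ (1 : ℝ)) ω ∂μ := by
        rw [← setIntegral_condExp hm ((integrable_const (1 : ℝ)).indicator (hs.inter ht)) hu]
        exact integral_congr_ae (ae_restrict_of_ae hst.symm)
    _ = μ.real (u ∩ (s ∩ t)) := by
        rw [setIntegral_indicator (hs.inter ht)]
        simp

variable {s : Set Ω} {W : Ω → ℝ}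

lemma map_withDensity_condExp_indicator_eq (hm : m ≤ mΩ) (hs : MeasurableSet s)
    (hW : Measurable W) {u : Set Ω} (hu : MeasurableSet[m] u)
    (hprod : ∀ B, MeasurableSet B → μ⟦s ∩ W ⁻¹' B | m⟧ =ᵐ[μ] μ⟦s | m⟧ * μ⟦W ⁻¹' B | m⟧) :
    ((μ.restrict u).withDensity fun ω ↦ ENNReal.ofReal ((μ⟦s | m⟧) ω)).map W
      = (μ.restrict (u ∩ s)).map W := by
  ext B hB
  have ht : MeasurableSet (W ⁻¹' B) := hW hB
  rw [Measure.map_apply hW hB, Measure.map_apply hW hB, withDensity_apply _ ht,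
    Measure.restrict_restrict ht, Measure.restrict_apply ht, Set.inter_comm (W ⁻¹' B),
    ← ofReal_integral_eq_lintegral_ofReal integrable_condExp.integrableOn
      (ae_restrict_of_ae (condExp_indicator_one_mem_Icc hm hs |>.mono fun _ h ↦ h.1)),
    setIntegral_inter_condExp_indicator hm hs ht hu (hprod B hB), ofReal_measureReal,
    Set.inter_comm (W ⁻¹' B), Set.inter_assoc]

lemma setIntegral_condExp_indicator_mul (hm : m ≤ mΩ) (hs : MeasurableSet s)
    (hW : Measurable W) {u : Set Ω} (hu : MeasurableSet[m] u)
    (hprod : ∀ B, MeasurableSet B → μ⟦s ∩ W ⁻¹' B | m⟧ =ᵐ[μ] μ⟦s | m⟧ * μ⟦W ⁻¹' B | m⟧) :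
    ∫ ω in u, (μ⟦s | m⟧) ω * W ω ∂μ = ∫ ω in u ∩ s, W ω ∂μ := by
  calc ∫ ω in u, (μ⟦s | m⟧) ω * W ω ∂μ
      = ∫ ω, W ω ∂(μ.restrict u).withDensity fun ω ↦ ENNReal.ofReal ((μ⟦s | m⟧) ω) := by
        rw [integral_withDensity_eq_integral_toReal_smul
          (stronglyMeasurable_condExp.mono hm).measurable.ennreal_ofReal
          (ae_of_all _ fun _ ↦ ENNReal.ofReal_lt_top)]
        refine integral_congr_ae (ae_restrict_of_ae ?_)
        filter_upwards [condExp_indicator_one_mem_Icc hm hs] with ω hω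
        rw [ENNReal.toReal_ofReal hω.1, smul_eq_mul]
    _ = ∫ ω in u ∩ s, W ω ∂μ := by
        rw [← integral_map (f := fun y : ℝ ↦ y) hW.aemeasurable aestronglyMeasurable_id,
          map_withDensity_condExp_indicator_eq hm hs hW hu hprod,
          integral_map (f := fun y : ℝ ↦ y) hW.aemeasurable aestronglyMeasurable_id]

theorem condExp_indicator_eq_mul_condExp (hm : m ≤ mΩ) (hs : MeasurableSet s)
    (hW : Measurable W) (hWi : Integrable W μ)
    (hprod : ∀ B, MeasurableSet B → μ⟦s ∩ W ⁻¹' B | m⟧ =ᵐ[μ] μ⟦s | m⟧ * μ⟦W ⁻¹' B | m⟧) :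
    μ[s.indicator W | m] =ᵐ[μ] μ⟦s | m⟧ * μ[W | m] := by
  have hpW : Integrable (μ⟦s | m⟧ * W) μ :=
    hWi.bdd_mul integrable_condExp.aestronglyMeasurable (norm_condExp_indicator_one_le hm hs)
  calc μ[s.indicator W | m]
      =ᵐ[μ] μ[μ⟦s | m⟧ * W | m] := by
        refine (ae_eq_condExp_of_forall_setIntegral_eq hm (hWi.indicator hs)
          (fun _ _ _ ↦ integrable_condExp.integrableOn) (fun u hu _ ↦ ?_)
          stronglyMeasurable_condExp.aestronglyMeasurable).symm
        rw [setIntegral_condExp hm hpW hu, setIntegral_indicator hs]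
        exact setIntegral_condExp_indicator_mul hm hs hW hu hprod
    _ =ᵐ[μ] μ⟦s | m⟧ * μ[W | m] :=
        condExp_stronglyMeasurable_mul_of_bound hm stronglyMeasurable_condExp hWi 1
          (norm_condExp_indicator_one_le hm hs)

theorem CondIndepFun.condExp_indicator_preimage_eq_mul {β : Type*} [MeasurableSpace β]
    {f : Ω → β} {hm : m ≤ mΩ} (h : CondIndepFun m hm f W μ) (hf : Measurable f)
    (hW : Measurable W) (hWi : Integrable W μ) {T : Set β} (hT : MeasurableSet T) :
    μ[(f ⁻¹' T).indicator W | m] =ᵐ[μ] μ⟦f ⁻¹' T | m⟧ * μ[W | m] :=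
  condExp_indicator_eq_mul_condExp hm (hf hT) hW hWi fun B hB ↦
    (condIndepFun_iff_condExp_inter_preimage_eq_mul hf hW).mp h T B hT hB

variable {A : Ω → ℝ} {hm : m ≤ mΩ}

theorem CondIndepFun.condExp_mul_eq_mul_condExp (h : CondIndepFun m hm A W μ)
    (hA : Measurable A) (hA01 : ∀ ω, A ω = 0 ∨ A ω = 1) (hW : Measurable W)
    (hWi : Integrable W μ) :
    μ[A * W | m] =ᵐ[μ] μ[A | m] * μ[W | m] := by
  have hAW : (A ⁻¹' {1}).indicator W = A * W := by
    ext ω; rcases hA01 ω with h | h <;> simp [h]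
  have hA1 : (A ⁻¹' {1}).indicator (fun _ ↦ (1 : ℝ)) = A := by
    ext ω; rcases hA01 ω with h | h <;> simp [h]
  simpa only [hAW, hA1] using
    h.condExp_indicator_preimage_eq_mul hA hW hWi (measurableSet_singleton 1)

theorem CondIndepFun.condExp_mul_sub_condExp_eq_zero (h : CondIndepFun m hm A W μ)
    (hA : Measurable A) (hA01 : ∀ ω, A ω = 0 ∨ A ω = 1) (hW : Measurable W)
    (hWi : Integrable W μ) :
    μ[A * (W - μ[W | m]) | m] =ᵐ[μ] 0 := by
  have hAi : Integrable A μ := by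
    simpa only [mul_one] using
      Integrable.mul_of_zero_or_one (W := 1) (integrable_const 1) hA.aestronglyMeasurable hA01
  have hAW : Integrable (A * W) μ := hWi.mul_of_zero_or_one hA.aestronglyMeasurable hA01
  have hAr : Integrable (A * μ[W | m]) μ :=
    integrable_condExp.mul_of_zero_or_one hA.aestronglyMeasurable hA01
  calc μ[A * (W - μ[W | m]) | m]
      = μ[A * W - A * μ[W | m] | m] := by rw [mul_sub]
    _ =ᵐ[μ] μ[A * W | m] - μ[A * μ[W | m] | m] := condExp_sub hAW hAr m
    _ =ᵐ[μ] μ[A | m] * μ[W | m] - μ[A | m] * μ[W | m] :=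
        (h.condExp_mul_eq_mul_condExp hA hA01 hW hWi).sub
          (condExp_mul_of_stronglyMeasurable_right stronglyMeasurable_condExp hAr hAi)
    _ = 0 := sub_self _

end ProductRule

section AIPW

/-- In the paper's notation `r₁ = μ₁(X)`, `r₀ = μ₀(X)`, `e₁ = e(X)` and `e₀ = 1 - e(X)`. -/
noncomputable def aipwScore (A Y r₁ r₀ e₁ e₀ : Ω → ℝ) (ω : Ω) : ℝ :=
  A ω * (Y ω - r₁ ω) / e₁ ω - (1 - A ω) * (Y ω - r₀ ω) / e₀ ω + r₁ ω - r₀ ω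

variable [StandardBorelSpace Ω] [IsFiniteMeasure μ] {A Y Y₀ Y₁ e₁ e₀ : Ω → ℝ} {δ : ℝ}

theorem condExp_aipwScore_eq (hm : m ≤ mΩ) (hA : Measurable A)
    (hA01 : ∀ ω, A ω = 0 ∨ A ω = 1) (hY₀ : Measurable Y₀) (hY₁ : Measurable Y₁)
    (hY₀i : Integrable Y₀ μ) (hY₁i : Integrable Y₁ μ)
    (hY : ∀ ω, Y ω = A ω * Y₁ ω + (1 - A ω) * Y₀ ω)
    (h : CondIndepFun m hm A (fun ω ↦ (Y₀ ω, Y₁ ω)) μ)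
    (he₁ : Measurable[m] e₁) (he₀ : Measurable[m] e₀) (hδ : 0 < δ)
    (hδe₁ : ∀ ω, δ ≤ e₁ ω) (hδe₀ : ∀ ω, δ ≤ e₀ ω) :
    μ[aipwScore A Y μ[Y₁ | m] μ[Y₀ | m] e₁ e₀ | m] =ᵐ[μ] μ[Y₁ - Y₀ | m] := by
  set r₁ := μ[Y₁ | m]
  set r₀ := μ[Y₀ | m]
  have hR₁ : μ[A * (Y₁ - r₁) | m] =ᵐ[μ] 0 :=
    (h.comp measurable_id measurable_snd).condExp_mul_sub_condExp_eq_zero hA hA01 hY₁ hY₁i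
  have h1A01 : ∀ ω, (1 - A) ω = 0 ∨ (1 - A) ω = 1 := fun ω ↦ by
    rcases hA01 ω with h | h <;> simp [h]
  have hR₀ : μ[(1 - A) * (Y₀ - r₀) | m] =ᵐ[μ] 0 :=
    (h.comp (measurable_const.sub measurable_id) measurable_fst).condExp_mul_sub_condExp_eq_zero
      (measurable_const.sub hA) h1A01 hY₀ hY₀i
  set T₁ := fun ω ↦ (A * (Y₁ - r₁)) ω / e₁ ω
  set T₀ := fun ω ↦ ((1 - A) * (Y₀ - r₀)) ω / e₀ ω
  have hscore : aipwScore A Y r₁ r₀ e₁ e₀ = T₁ - T₀ + (r₁ - r₀) := by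
    ext ω; rcases hA01 ω with h | h <;> simp [aipwScore, T₁, T₀, hY, h] <;> ring
  have hR₁i : Integrable (A * (Y₁ - r₁)) μ :=
    (hY₁i.sub integrable_condExp).mul_of_zero_or_one hA.aestronglyMeasurable hA01
  have hR₀i : Integrable ((1 - A) * (Y₀ - r₀)) μ :=
    (hY₀i.sub integrable_condExp).mul_of_zero_or_one
      (measurable_const.sub hA).aestronglyMeasurable h1A01
  have hT₁i : Integrable T₁ μ := hR₁i.div_of_le (he₁.mono hm le_rfl).aemeasurable hδ hδe₁
  have hT₀i : Integrable T₀ μ := hR₀i.div_of_le (he₀.mono hm le_rfl).aemeasurable hδ hδe₀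
  have hr : Integrable (r₁ - r₀) μ := integrable_condExp.sub integrable_condExp
  calc μ[aipwScore A Y r₁ r₀ e₁ e₀ | m]
      = μ[T₁ - T₀ + (r₁ - r₀) | m] := by rw [hscore]
    _ =ᵐ[μ] μ[T₁ | m] - μ[T₀ | m] + μ[r₁ - r₀ | m] :=
        (condExp_add (hT₁i.sub hT₀i) hr m).trans ((condExp_sub hT₁i hT₀i m).add .rfl)
    _ =ᵐ[μ] 0 - 0 + (r₁ - r₀) :=
        ((condExp_div_eq_zero hm he₁ hδ hδe₁ hR₁i hR₁).sub
          (condExp_div_eq_zero hm he₀ hδ hδe₀ hR₀i hR₀)).add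
          (.of_eq (condExp_of_stronglyMeasurable hm
            (stronglyMeasurable_condExp.sub stronglyMeasurable_condExp) hr))
    _ =ᵐ[μ] μ[Y₁ - Y₀ | m] := by
        rw [sub_self, zero_add]
        exact (condExp_sub hY₁i hY₀i m).symm

end AIPW

end ProbabilityTheory

theorem aipw_double_robustness_or_side_general
    {Ω : Type*} [MeasurableSpace Ω] [StandardBorelSpace Ω]
    {S : Type*} [MeasurableSpace S]
    (μ : Measure Ω) [IsProbabilityMeasure μ]
    (A : Ω → ℝ) (hAm : Measurable A) (hA01 : ∀ ω, A ω = 0 ∨ A ω = 1)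
    (X : Ω → S) (hXm : Measurable X)
    (Y0 Y1 : Ω → ℝ) (hY0m : Measurable Y0) (hY1m : Measurable Y1)
    (hY0i : Integrable Y0 μ) (hY1i : Integrable Y1 μ)
    (Y : Ω → ℝ) (hYdef : ∀ ω, Y ω = A ω * Y1 ω + (1 - A ω) * Y0 ω)
    (huncf : CondIndepFun (MeasurableSpace.comap X inferInstance) (hXm.comap_le)
      A (fun ω => (Y0 ω, Y1 ω)) μ)
    (δ : ℝ) (hδ0 : 0 < δ)
    (e : S → ℝ) (hem : Measurable e) (he : ∀ x, δ ≤ e x ∧ e x ≤ 1 - δ)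
    (g : S → ℝ) (hg : Measurable g) :
    μ[fun ω =>
        A ω * (Y ω - (μ[Y1 | MeasurableSpace.comap X inferInstance]) ω) / e (X ω)
        - (1 - A ω) * (Y ω - (μ[Y0 | MeasurableSpace.comap X inferInstance]) ω)
          / (1 - e (X ω))
        + (μ[Y1 | MeasurableSpace.comap X inferInstance]) ω
        - (μ[Y0 | MeasurableSpace.comap X inferInstance]) ω
      | MeasurableSpace.comap (fun ω => g (X ω)) inferInstance]
      =ᵐ[μ]
    μ[fun ω => Y1 ω - Y0 ω
      | MeasurableSpace.comap (fun ω => g (X ω)) inferInstance] := by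
  have heX : Measurable[MeasurableSpace.comap X inferInstance] (fun ω ↦ e (X ω)) :=
    hem.comp (comap_measurable X)
  have hZX : MeasurableSpace.comap (fun ω ↦ g (X ω)) inferInstance
      ≤ MeasurableSpace.comap X inferInstance :=
    (hg.comp (comap_measurable X)).comap_le
  exact condExp_ae_eq_of_condExp_ae_eq_of_le hZX hXm.comap_le <|
    condExp_aipwScore_eq hXm.comap_le hAm hA01 hY0m hY1m hY0i hY1i hYdef huncf heX
      (measurable_const.sub heX) hδ0 (fun ω ↦ (he (X ω)).1)
      (fun ω ↦ by linarith [(he (X ω)).2])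

/-- Double robustness of the AIPW functional, outcome-regression side: under
unconfoundedness, for ANY measurable `e : S → ℝ` with `δ ≤ e(x) ≤ 1 − δ` for all `x`, and
with the TRUE conditional means `μ1(X) = E[Y1 | σ(X)]`, `μ0(X) = E[Y0 | σ(X)]`,
`E[ A·(Y − μ1(X))/e(X) − (1−A)·(Y − μ0(X))/(1 − e(X)) + μ1(X) − μ0(X) | σ(Z) ]
  = E[Y1 − Y0 | σ(Z)]` a.s. -/
theorem aipw_double_robustness_or_side
    {Ω : Type*} [MeasurableSpace Ω] [StandardBorelSpace Ω]
    {S : Type*} [MeasurableSpace S]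
    (μ : Measure Ω) [IsProbabilityMeasure μ]
    (A : Ω → ℝ) (hAm : Measurable A) (hA01 : ∀ ω, A ω = 0 ∨ A ω = 1)
    (X : Ω → S) (hXm : Measurable X)
    (Y0 Y1 : Ω → ℝ) (hY0m : Measurable Y0) (hY1m : Measurable Y1)
    (hY0i : Integrable Y0 μ) (hY1i : Integrable Y1 μ)
    (Y : Ω → ℝ) (hYdef : ∀ ω, Y ω = A ω * Y1 ω + (1 - A ω) * Y0 ω)
    (huncf : CondIndepFun (MeasurableSpace.comap X inferInstance) (hXm.comap_le)
      A (fun ω => (Y0 ω, Y1 ω)) μ)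
    (δ : ℝ) (hδ0 : 0 < δ) (hδhalf : δ < 1 / 2)
    (e : S → ℝ) (hem : Measurable e) (he : ∀ x, δ ≤ e x ∧ e x ≤ 1 - δ)
    (g : S → ℝ) (hg : Measurable g) :
    μ[fun ω =>
        A ω * (Y ω - (μ[Y1 | MeasurableSpace.comap X inferInstance]) ω) / e (X ω)
        - (1 - A ω) * (Y ω - (μ[Y0 | MeasurableSpace.comap X inferInstance]) ω)
          / (1 - e (X ω))
        + (μ[Y1 | MeasurableSpace.comap X inferInstance]) ω
        - (μ[Y0 | MeasurableSpace.comap X inferInstance]) ω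
      | MeasurableSpace.comap (fun ω => g (X ω)) inferInstance]
      =ᵐ[μ]
    μ[fun ω => Y1 ω - Y0 ω
      | MeasurableSpace.comap (fun ω => g (X ω)) inferInstance] :=
  aipw_double_robustness_or_side_general μ A hAm hA01 X hXm Y0 Y1 hY0m hY1m hY0i hY1i Y hYdef huncf
    δ hδ0 e hem he g hg
end

section
/- Extended balancing-score unconfoundedness (the conditional independence step in Section 2.3): if A and (Y0, Y1) are conditionally independent given σ(X), and π : S → ℝ is a measurable function such that π ∘ X is a version of E[A | σ(X)], then for any measurable g : S → ℝ, the treatment A and the pair (Y0, Y1) are conditionally independent given the σ-algebra σ(g ∘ X, π ∘ X) generated by the pair (g(X), π(X)). -/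
/-!
The coarser σ-algebra `σ(g X, π X) ≤ σ(X)` still contains the propensity `π X = E[A | σ(X)]`.
Since `A` is binary, conditional independence only concerns the event `{A = 1}`, and the tower
property together with pulling out the `σ(g X, π X)`-measurable factor `π X` gives
`P(A = 1, Y ∈ t | g X, π X) = E[π X · P(Y ∈ t | X) | g X, π X] = π X · P(Y ∈ t | g X, π X)`.
-/

open MeasureTheory ProbabilityTheory MeasurableSpace

theorem MeasurableSpace.comap_eq_generateFrom_preimage_singleton {Ω β : Type*}
    [MeasurableSpace β] [MeasurableSingletonClass β] {f : Ω → β} {a b : β}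
    (hf : ∀ ω, f ω = a ∨ f ω = b) :
    MeasurableSpace.comap f inferInstance = generateFrom {f ⁻¹' {b}} := by
  classical
  refine le_antisymm ?_ (generateFrom_le ?_)
  · have hf_piecewise : (f ⁻¹' {b}).piecewise (fun _ => b) (fun _ => a) = f := by
      funext ω
      by_cases hω : ω ∈ f ⁻¹' {b}
      · rw [Set.piecewise_eq_of_mem _ _ _ hω]
        exact hω.symm
      · rw [Set.piecewise_eq_of_notMem _ _ _ hω]
        exact ((hf ω).resolve_right hω).symm
    have hf_meas : Measurable[generateFrom {f ⁻¹' {b}}]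
        ((f ⁻¹' {b}).piecewise (fun _ => b) (fun _ => a)) :=
      measurable_const.piecewise (measurableSet_generateFrom rfl) measurable_const
    rw [hf_piecewise] at hf_meas
    exact hf_meas.comap_le
  · rintro s rfl
    exact ⟨{b}, measurableSet_singleton b, rfl⟩

section

variable {Ω : Type*} {m₂ mX mG : MeasurableSpace Ω} [mΩ : MeasurableSpace Ω]
  {μ : Measure Ω} [IsFiniteMeasure μ]

theorem condExp_ae_eq_mul_of_le_of_aestronglyMeasurable {u v w : Ω → ℝ}
    (hGX : mG ≤ mX) (hX : mX ≤ mΩ)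
    (hX_mul : μ[w | mX] =ᵐ[μ] μ[u | mX] * μ[v | mX])
    (hu : AEStronglyMeasurable[mG] (μ[u | mX]) μ) :
    μ[w | mG] =ᵐ[μ] μ[u | mG] * μ[v | mG] := by
  have hu_G : μ[u | mG] =ᵐ[μ] μ[u | mX] :=
    (condExp_condExp_of_le hGX hX).symm.trans
      (condExp_of_aestronglyMeasurable' (hGX.trans hX) hu integrable_condExp)
  calc μ[w | mG] =ᵐ[μ] μ[μ[w | mX] | mG] := (condExp_condExp_of_le hGX hX).symm
    _ =ᵐ[μ] μ[μ[u | mX] * μ[v | mX] | mG] := condExp_congr_ae hX_mul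
    _ =ᵐ[μ] μ[u | mX] * μ[μ[v | mX] | mG] :=
      condExp_mul_of_aestronglyMeasurable_left hu (integrable_condExp.congr hX_mul)
        integrable_condExp
    _ =ᵐ[μ] μ[u | mG] * μ[v | mG] := hu_G.symm.mul (condExp_condExp_of_le hGX hX)

theorem ProbabilityTheory.CondIndep.of_le_of_aestronglyMeasurable_condExp [StandardBorelSpace Ω]
    {E : Set Ω} (hE : MeasurableSet E) (hm₂ : m₂ ≤ mΩ) (hGX : mG ≤ mX) (hX : mX ≤ mΩ)
    (h : CondIndep mX (generateFrom {E}) m₂ hX μ)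
    (hE_G : AEStronglyMeasurable[mG] (μ⟦E | mX⟧) μ) :
    CondIndep mG (generateFrom {E}) m₂ (hGX.trans hX) μ := by
  have hEm : ∀ s ∈ ({E} : Set (Set Ω)), MeasurableSet s := by
    rintro s rfl
    exact hE
  have hm₂m : ∀ s ∈ {s | MeasurableSet[m₂] s}, MeasurableSet s := fun s hs => hm₂ s hs
  rw [condIndep_iff _ _ _ _ (generateFrom_le hEm) hm₂] at h
  refine CondIndepSets.condIndep (generateFrom_le hEm) hm₂ (IsPiSystem.singleton E)
    (@isPiSystem_measurableSet Ω m₂) rfl (@generateFrom_measurableSet Ω m₂).symm ?_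
  rw [condIndepSets_iff _ _ _ _ hEm hm₂m]
  rintro s t rfl ht
  exact condExp_ae_eq_mul_of_le_of_aestronglyMeasurable hGX hX
    (h s t (measurableSet_generateFrom rfl) ht) hE_G

end

/-- Extended balancing-score unconfoundedness: if `A ⟂ (Y0, Y1) | σ(X)` and
`π ∘ X` is a version of `E[A | σ(X)]`, then for any measurable `g : S → ℝ`, `A` and
`(Y0, Y1)` are conditionally independent given the σ-algebra generated by
`(g(X), π(X))`. -/
theorem extended_balancing_score_unconfoundedness
    {Ω : Type*} [MeasurableSpace Ω] [StandardBorelSpace Ω]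
    {S : Type*} [MeasurableSpace S]
    (μ : Measure Ω) [IsProbabilityMeasure μ]
    (A : Ω → ℝ) (hAm : Measurable A) (hA01 : ∀ ω, A ω = 0 ∨ A ω = 1)
    (X : Ω → S) (hXm : Measurable X)
    (Y0 Y1 : Ω → ℝ) (hY0m : Measurable Y0) (hY1m : Measurable Y1)
    (huncf : CondIndepFun (MeasurableSpace.comap X inferInstance) (hXm.comap_le)
      A (fun ω => (Y0 ω, Y1 ω)) μ)
    (π : S → ℝ) (hπm : Measurable π)
    (hπver : (fun ω => π (X ω)) =ᵐ[μ] μ[A | MeasurableSpace.comap X inferInstance])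
    (g : S → ℝ) (hg : Measurable g) :
    CondIndepFun (MeasurableSpace.comap (fun ω => (g (X ω), π (X ω))) inferInstance)
      (((hg.comp hXm).prodMk (hπm.comp hXm)).comap_le)
      A (fun ω => (Y0 ω, Y1 ω)) μ := by
  have hA_indicator : (A ⁻¹' {1}).indicator (fun _ => (1 : ℝ)) = A := by
    funext ω
    rcases hA01 ω with h | h <;> simp [h]
  have hGX : MeasurableSpace.comap (fun ω => (g (X ω), π (X ω))) inferInstance ≤
      MeasurableSpace.comap X inferInstance :=
    ((hg.prodMk hπm).comp (comap_measurable X)).comap_le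
  have hπ_G : AEStronglyMeasurable[MeasurableSpace.comap (fun ω => (g (X ω), π (X ω)))
      inferInstance] (μ⟦A ⁻¹' {1} | MeasurableSpace.comap X inferInstance⟧) μ := by
    rw [hA_indicator]
    exact (measurable_snd.comp (comap_measurable _)).aestronglyMeasurable.congr hπver
  rw [condIndepFun_iff_condIndep _ _ _ _ μ, comap_eq_generateFrom_preimage_singleton hA01]
    at huncf ⊢
  exact huncf.of_le_of_aestronglyMeasurable_condExp (hAm (measurableSet_singleton 1))
    (hY0m.prodMk hY1m).comap_le hGX hXm.comap_le hπ_G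
end

section
/- Conditional bias decomposition of the matching imputation (the U_{3N} step in the proof of Theorem 1): for every unit i, E[Ŷᵢ¹ − Ŷᵢ⁰ | 𝒢] = ( μ1(Xᵢ) − μ0(Xᵢ) ) + (2Aᵢ − 1)·(1/M)·Σ_{j ∈ 𝒥_M(i)} ( μ_{1−Aᵢ}(Xᵢ) − μ_{1−Aᵢ}(Xⱼ) ) almost surely. -/
/-!
Both imputed outcomes are affine in the `Yⱼ`: `Ŷᵢ¹ − Ŷᵢ⁰ = (2Aᵢ − 1)(Yᵢ − M⁻¹ ∑_{j ∈ 𝒥(i)} Yⱼ)`.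
The sign `2Aᵢ − 1` and the random index set `𝒥(i)` are `𝒢`-measurable, so they pass through the
conditional expectation (the random sum being a finite sum of `𝒢`-indicators times `Yⱼ`). What
remains is `E[Yⱼ | 𝒢] = μ_{Aⱼ}(Xⱼ)`, and since every match has treatment `1 − Aᵢ`, the matched
average of `μ_{1−Aᵢ}(Xⱼ)` differs from `μ_{1−Aᵢ}(Xᵢ)` exactly by the bias term.
-/

open MeasureTheory ProbabilityTheory

theorem measurableSet_setOf_mem_of_measurableSet_fiber {Ω ι : Type*} [MeasurableSpace Ω]
    [Countable ι] {J : Ω → Finset ι} (hJ : ∀ s, MeasurableSet {ω | J ω = s}) (j : ι) :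
    MeasurableSet {ω | j ∈ J ω} :=
  letI : MeasurableSpace (Finset ι) := ⊤
  measurable_to_countable' hJ (show MeasurableSet {s : Finset ι | j ∈ s} from trivial)

section RandomIndexSum

variable {Ω ι E : Type*} [Fintype ι] [NormedAddCommGroup E] {m0 : MeasurableSpace Ω}
  {μ : Measure Ω}

theorem finsetSum_random_index_eq_sum_indicator (J : Ω → Finset ι) (Y : ι → Ω → E) :
    (fun ω => ∑ j ∈ J ω, Y j ω) = ∑ j, {ω | j ∈ J ω}.indicator (Y j) := by
  classical
  ext ω
  simp only [Finset.sum_apply, Set.indicator_apply, Set.mem_ofPred_eq]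
  rw [Finset.sum_ite_mem, Finset.univ_inter]

theorem integrable_finsetSum_random_index {J : Ω → Finset ι}
    (hJ : ∀ j, MeasurableSet {ω | j ∈ J ω}) {Y : ι → Ω → E} (hY : ∀ j, Integrable (Y j) μ) :
    Integrable (fun ω => ∑ j ∈ J ω, Y j ω) μ := by
  rw [finsetSum_random_index_eq_sum_indicator]
  exact integrable_finsetSum' _ fun j _ => (hY j).indicator (hJ j)

theorem condExp_finsetSum_random_index [NormedSpace ℝ E] [CompleteSpace E]
    {m : MeasurableSpace Ω} (hm : m ≤ m0) {J : Ω → Finset ι}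
    (hJ : ∀ j, MeasurableSet[m] {ω | j ∈ J ω}) {Y : ι → Ω → E}
    (hY : ∀ j, Integrable (Y j) μ) :
    μ[fun ω => ∑ j ∈ J ω, Y j ω | m] =ᵐ[μ] fun ω => ∑ j ∈ J ω, μ[Y j | m] ω := by
  rw [finsetSum_random_index_eq_sum_indicator, finsetSum_random_index_eq_sum_indicator]
  refine (condExp_finsetSum (fun j _ => (hY j).indicator (hm _ (hJ j))) m).trans ?_
  have hind := ae_all_iff.2 fun j => condExp_indicator (hY j) (hJ j) (μ := μ)
  filter_upwards [hind] with ω hω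
  simp only [Finset.sum_apply, hω]

end RandomIndexSum

theorem imputed_difference_eq {a : ℝ} (ha : a = 0 ∨ a = 1) (y z : ℝ) :
    ((if a = 1 then y else z) - if a = 0 then y else z) = (2 * a - 1) * (y - z) := by
  rcases ha with rfl | rfl <;> norm_num

theorem matching_bias_identity {ι S : Type*} (μ₀ μ₁ : S → ℝ) (A : ι → ℝ) (X : ι → S) (i : ι)
    (hA : A i = 0 ∨ A i = 1) (s : Finset ι) (hs : s.card ≠ 0)
    (hopp : ∀ j ∈ s, A j = 1 - A i) :
    let m j := A j * μ₁ (X j) + (1 - A j) * μ₀ (X j)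
    (2 * A i - 1) * (m i - (s.card : ℝ)⁻¹ * ∑ j ∈ s, m j)
      = (μ₁ (X i) - μ₀ (X i)) + (2 * A i - 1) * ((s.card : ℝ)⁻¹ *
          ∑ j ∈ s, (if A i = 1 then μ₀ (X i) - μ₀ (X j) else μ₁ (X i) - μ₁ (X j))) := by
  intro m
  have hs' : (s.card : ℝ) ≠ 0 := by exact_mod_cast hs
  have hsum (c : ℝ) (f : ι → ℝ) : ∑ j ∈ s, (c - f j) = s.card * c - ∑ j ∈ s, f j := by
    rw [Finset.sum_sub_distrib, Finset.sum_const, nsmul_eq_mul]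
  rcases hA with h | h
  · have hm : ∀ j ∈ s, m j = μ₁ (X j) := fun j hj => by simp [m, hopp j hj, h]
    simp only [Finset.sum_congr rfl hm, m, h, zero_ne_one, ↓reduceIte, hsum]
    field_simp
    ring
  · have hm : ∀ j ∈ s, m j = μ₀ (X j) := fun j hj => by simp [m, hopp j hj, h]
    simp only [Finset.sum_congr rfl hm, m, h, ↓reduceIte, hsum]
    field_simp
    ring

theorem matching_conditional_bias_decomposition_general
    {Ω : Type*} [m0Ω : MeasurableSpace Ω] (μ : Measure Ω) [IsProbabilityMeasure μ]
    {S : Type*}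
    (N M : ℕ) (hM : 1 ≤ M)
    (Y A : Fin N → Ω → ℝ) (X : Fin N → Ω → S)
    (hYint : ∀ j, Integrable (Y j) μ)
    (hA01 : ∀ j ω, A j ω = 0 ∨ A j ω = 1)
    (G : MeasurableSpace Ω) (hG : G ≤ m0Ω)
    (hGA : ∀ j, Measurable[G] (A j))
    (μ₀ μ₁ : S → ℝ)
    (hcond : ∀ j, μ[Y j | G]
      =ᵐ[μ] fun ω => A j ω * μ₁ (X j ω) + (1 - A j ω) * μ₀ (X j ω))
    (J : Fin N → Ω → Finset (Fin N))
    (hJmeas : ∀ j (s : Finset (Fin N)), MeasurableSet[G] {ω | J j ω = s})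
    (hJcard : ∀ j ω, (J j ω).card = M)
    (hJopp : ∀ i ω, ∀ j ∈ J i ω, A j ω = 1 - A i ω)
    (i : Fin N) :
    μ[fun ω =>
        (if A i ω = 1 then Y i ω else (M : ℝ)⁻¹ * ∑ j ∈ J i ω, Y j ω)
        - (if A i ω = 0 then Y i ω else (M : ℝ)⁻¹ * ∑ j ∈ J i ω, Y j ω) | G]
      =ᵐ[μ] fun ω =>
        (μ₁ (X i ω) - μ₀ (X i ω))
        + (2 * A i ω - 1) * ((M : ℝ)⁻¹ *
            ∑ j ∈ J i ω,
              (if A i ω = 1 then μ₀ (X i ω) - μ₀ (X j ω)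
               else μ₁ (X i ω) - μ₁ (X j ω))) := by
  have hJmem := measurableSet_setOf_mem_of_measurableSet_fiber (hJmeas i)
  set matchMean : Ω → ℝ := fun ω => (M : ℝ)⁻¹ * ∑ j ∈ J i ω, Y j ω
  have hmatchMean : μ[matchMean | G] =ᵐ[μ] fun ω => (M : ℝ)⁻¹ * ∑ j ∈ J i ω, μ[Y j | G] ω :=
    (condExp_smul (M : ℝ)⁻¹ _ G).trans <|
      (condExp_finsetSum_random_index hG hJmem hYint).fun_comp _
  have hmatchMean_int : Integrable matchMean μ :=
    (integrable_finsetSum_random_index (fun j => hG _ (hJmem j)) hYint).const_mul _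
  have hsign_bound : ∀ᵐ ω ∂μ, ‖2 * A i ω - 1‖ ≤ 1 := .of_forall fun ω => by
    rcases hA01 i ω with h | h <;> norm_num [h]
  have hpull := condExp_stronglyMeasurable_mul_of_bound hG
    ((measurable_const.mul (hGA i)).sub measurable_const).stronglyMeasurable
    ((hYint i).sub hmatchMean_int) 1 hsign_bound
  simp_rw [imputed_difference_eq (hA01 i _)]
  refine hpull.trans ?_
  filter_upwards [condExp_sub (hYint i) hmatchMean_int G, hmatchMean, ae_all_iff.2 hcond]
    with ω hsub hmean hY
  simp only [Pi.mul_apply, hsub, Pi.sub_apply, hmean, hY]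
  rw [← hJcard i ω]
  exact matching_bias_identity μ₀ μ₁ (A · ω) (X · ω) i (hA01 i ω) (J i ω)
    (by rw [hJcard]; omega) (hJopp i ω)

/-- Conditional bias decomposition of the matching imputation: for every
unit `i`,
`E[Ŷᵢ¹ − Ŷᵢ⁰ | 𝒢] = (μ1(Xᵢ) − μ0(Xᵢ))
    + (2Aᵢ − 1)·(1/M)·∑_{j ∈ 𝒥_M(i)} (μ_{1−Aᵢ}(Xᵢ) − μ_{1−Aᵢ}(Xⱼ))` a.s. -/
theorem matching_conditional_bias_decomposition
    {Ω : Type*} [m0Ω : MeasurableSpace Ω] (μ : Measure Ω) [IsProbabilityMeasure μ]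
    {S : Type*} [MeasurableSpace S]
    (N M : ℕ) (hM : 1 ≤ M)
    (Y A : Fin N → Ω → ℝ) (X : Fin N → Ω → S)
    (hYm : ∀ j, Measurable (Y j)) (hYint : ∀ j, Integrable (Y j) μ)
    (hA01 : ∀ j ω, A j ω = 0 ∨ A j ω = 1)
    (G : MeasurableSpace Ω) (hG : G ≤ m0Ω)
    (hGA : ∀ j, Measurable[G] (A j)) (hGX : ∀ j, Measurable[G] (X j))
    (μ₀ μ₁ : S → ℝ) (hμ₀ : Measurable μ₀) (hμ₁ : Measurable μ₁)
    (hcond : ∀ j, μ[Y j | G]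
      =ᵐ[μ] fun ω => A j ω * μ₁ (X j ω) + (1 - A j ω) * μ₀ (X j ω))
    (J : Fin N → Ω → Finset (Fin N))
    (hJmeas : ∀ j (s : Finset (Fin N)), MeasurableSet[G] {ω | J j ω = s})
    (hJcard : ∀ j ω, (J j ω).card = M)
    (hJopp : ∀ i ω, ∀ j ∈ J i ω, A j ω = 1 - A i ω)
    (i : Fin N) :
    μ[fun ω =>
        (if A i ω = 1 then Y i ω else (M : ℝ)⁻¹ * ∑ j ∈ J i ω, Y j ω)
        - (if A i ω = 0 then Y i ω else (M : ℝ)⁻¹ * ∑ j ∈ J i ω, Y j ω) | G]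
      =ᵐ[μ] fun ω =>
        (μ₁ (X i ω) - μ₀ (X i ω))
        + (2 * A i ω - 1) * ((M : ℝ)⁻¹ *
            ∑ j ∈ J i ω,
              (if A i ω = 1 then μ₀ (X i ω) - μ₀ (X j ω)
               else μ₁ (X i ω) - μ₁ (X j ω))) :=
  matching_conditional_bias_decomposition_general (m0Ω := m0Ω) μ N M hM Y A X hYint hA01 G hG hGA μ₀
    μ₁ hcond J hJmeas hJcard hJopp i
end

section
/- Exact AIPW-type representation of the bias-corrected matching imputations via match counts: Σ_{i=1}^N (Ỹᵢ¹ − Ỹᵢ⁰) = Σ_{i=1}^N [ Aᵢ·(Yᵢ − m₁(Xᵢ))·(1 + K_M(i)/M) − (1−Aᵢ)·(Yᵢ − m₀(Xᵢ))·(1 + K_M(i)/M) + m₁(Xᵢ) − m₀(Xᵢ) ], where K_M(i) = Σ_{l=1}^N 𝟙{i ∈ 𝒥_M(l)} is the number of times unit i is used as a match. -/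
/-- Exact AIPW-type representation of the bias-corrected matching
imputations via match counts:
`∑ᵢ (Ỹᵢ¹ − Ỹᵢ⁰) = ∑ᵢ [Aᵢ(Yᵢ − m₁(Xᵢ))(1 + K_M(i)/M) − (1−Aᵢ)(Yᵢ − m₀(Xᵢ))(1 + K_M(i)/M)
  + m₁(Xᵢ) − m₀(Xᵢ)]`, where `K_M(i)` is the number of times unit `i` is used as a match. -/
theorem bias_corrected_matching_aipw_representation
    {S : Type*} (N M : ℕ) (hM : 1 ≤ M)
    (Y A : Fin N → ℝ) (X : Fin N → S) (hA01 : ∀ i, A i = 0 ∨ A i = 1)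
    (m₀ m₁ : S → ℝ)
    (J : Fin N → Finset (Fin N))
    (hJcard : ∀ i, (J i).card = M)
    (hJopp : ∀ i, ∀ j ∈ J i, A j = 1 - A i) :
    ∑ i, ((if A i = 1 then Y i
          else (M : ℝ)⁻¹ * ∑ j ∈ J i, (Y j + m₁ (X i) - m₁ (X j)))
        - (if A i = 0 then Y i
          else (M : ℝ)⁻¹ * ∑ j ∈ J i, (Y j + m₀ (X i) - m₀ (X j))))
      = ∑ i, (A i * (Y i - m₁ (X i))
            * (1 + ((Finset.univ.filter (fun l => i ∈ J l)).card : ℝ) / (M : ℝ))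
          - (1 - A i) * (Y i - m₀ (X i))
            * (1 + ((Finset.univ.filter (fun l => i ∈ J l)).card : ℝ) / (M : ℝ))
          + (m₁ (X i) - m₀ (X i))) := by
  classical
  have hMne : (M : ℝ) ≠ 0 := Nat.cast_ne_zero.mpr (by omega)
  set K : Fin N → ℝ := fun i => ((Finset.univ.filter (fun l => i ∈ J l)).card : ℝ) with hK
  set g : Fin N → ℝ := fun j => if A j = 1 then Y j - m₁ (X j) else -(Y j - m₀ (X j)) with hg
  have swap : ∑ i, ∑ j ∈ J i, g j = ∑ j, K j * g j := by
    have e1 : ∀ i, ∑ j ∈ J i, g j = ∑ j, if j ∈ J i then g j else 0 := by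
      intro i
      rw [Finset.sum_ite_mem, Finset.univ_inter]
    simp_rw [e1]
    rw [Finset.sum_comm]
    refine Finset.sum_congr rfl fun j _ => ?_
    rw [← Finset.sum_filter, Finset.sum_const, nsmul_eq_mul, hK]
  have hL : ∀ i, ((if A i = 1 then Y i
          else (M : ℝ)⁻¹ * ∑ j ∈ J i, (Y j + m₁ (X i) - m₁ (X j)))
        - (if A i = 0 then Y i
          else (M : ℝ)⁻¹ * ∑ j ∈ J i, (Y j + m₀ (X i) - m₀ (X j))))
      = g i + (m₁ (X i) - m₀ (X i)) + (M : ℝ)⁻¹ * ∑ j ∈ J i, g j := by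
    intro i
    rcases hA01 i with h0 | h1
    · have hj : ∀ j ∈ J i, g j = Y j - m₁ (X j) := by
        intro j hjm
        have hAj := hJopp i j hjm
        simp [hg, hAj, h0]
      rw [if_neg (by rw [h0]; norm_num), if_pos h0]
      have e1 : ∑ j ∈ J i, (Y j + m₁ (X i) - m₁ (X j))
          = (∑ j ∈ J i, (Y j - m₁ (X j))) + (M : ℝ) * m₁ (X i) := by
        calc ∑ j ∈ J i, (Y j + m₁ (X i) - m₁ (X j))
            = ∑ j ∈ J i, ((Y j - m₁ (X j)) + m₁ (X i)) :=
              Finset.sum_congr rfl fun j _ => by ring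
          _ = (∑ j ∈ J i, (Y j - m₁ (X j))) + (M : ℝ) * m₁ (X i) := by
              rw [Finset.sum_add_distrib, Finset.sum_const, hJcard i, nsmul_eq_mul]
      have e2 : ∑ j ∈ J i, g j = ∑ j ∈ J i, (Y j - m₁ (X j)) :=
        Finset.sum_congr rfl hj
      have hgi : g i = -(Y i - m₀ (X i)) := by simp [hg, h0]
      rw [e1, e2, hgi]
      field_simp
      ring
    · have hj : ∀ j ∈ J i, g j = -(Y j - m₀ (X j)) := by
        intro j hjm
        have hAj := hJopp i j hjm
        rw [h1] at hAj
        simp [hg, hAj]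
      rw [if_pos h1, if_neg (by rw [h1]; norm_num)]
      have e1 : ∑ j ∈ J i, (Y j + m₀ (X i) - m₀ (X j))
          = (∑ j ∈ J i, (Y j - m₀ (X j))) + (M : ℝ) * m₀ (X i) := by
        calc ∑ j ∈ J i, (Y j + m₀ (X i) - m₀ (X j))
            = ∑ j ∈ J i, ((Y j - m₀ (X j)) + m₀ (X i)) :=
              Finset.sum_congr rfl fun j _ => by ring
          _ = (∑ j ∈ J i, (Y j - m₀ (X j))) + (M : ℝ) * m₀ (X i) := by
              rw [Finset.sum_add_distrib, Finset.sum_const, hJcard i, nsmul_eq_mul]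
      have e2 : ∑ j ∈ J i, g j = ∑ j ∈ J i, -(Y j - m₀ (X j)) :=
        Finset.sum_congr rfl hj
      have hgi : g i = Y i - m₁ (X i) := by simp [hg, h1]
      rw [e1, e2, hgi, Finset.sum_neg_distrib]
      field_simp
      ring
  have hR : ∀ i, (A i * (Y i - m₁ (X i)) * (1 + K i / (M : ℝ))
          - (1 - A i) * (Y i - m₀ (X i)) * (1 + K i / (M : ℝ))
          + (m₁ (X i) - m₀ (X i)))
      = g i + (m₁ (X i) - m₀ (X i)) + (M : ℝ)⁻¹ * (K i * g i) := by
    intro i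
    rcases hA01 i with h0 | h1
    · have hgi : g i = -(Y i - m₀ (X i)) := by simp [hg, h0]
      rw [h0, hgi]
      field_simp
      ring
    · have hgi : g i = Y i - m₁ (X i) := by simp [hg, h1]
      rw [h1, hgi]
      field_simp
      ring
  calc ∑ i, ((if A i = 1 then Y i
          else (M : ℝ)⁻¹ * ∑ j ∈ J i, (Y j + m₁ (X i) - m₁ (X j)))
        - (if A i = 0 then Y i
          else (M : ℝ)⁻¹ * ∑ j ∈ J i, (Y j + m₀ (X i) - m₀ (X j))))
      = ∑ i, (g i + (m₁ (X i) - m₀ (X i)) + (M : ℝ)⁻¹ * ∑ j ∈ J i, g j) :=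
        Finset.sum_congr rfl fun i _ => hL i
    _ = (∑ i, (g i + (m₁ (X i) - m₀ (X i)))) + (M : ℝ)⁻¹ * ∑ i, ∑ j ∈ J i, g j := by
        rw [Finset.sum_add_distrib, Finset.mul_sum]
    _ = (∑ i, (g i + (m₁ (X i) - m₀ (X i)))) + (M : ℝ)⁻¹ * ∑ i, K i * g i := by rw [swap]
    _ = ∑ i, (g i + (m₁ (X i) - m₀ (X i)) + (M : ℝ)⁻¹ * (K i * g i)) := by
        simp only [Finset.sum_add_distrib, ← Finset.mul_sum]
    _ = ∑ i, (A i * (Y i - m₁ (X i)) * (1 + K i / (M : ℝ))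
          - (1 - A i) * (Y i - m₀ (X i)) * (1 + K i / (M : ℝ))
          + (m₁ (X i) - m₀ (X i))) :=
        Finset.sum_congr rfl fun i _ => (hR i).symm
end

section
/- Second-order kernel bias expansion (the U_{2N} expectation step in the proof of Theorem 1): lim_{h→0⁺} h^{−2} · ∫ K(t)·(τ(z + ht) − τ(z))·f(z + ht) dt = (∫ t²·K(t) dt) · ( τ′(z)·f′(z) + (1/2)·τ″(z)·f(z) ); equivalently, (1/h)·∫ K((u−z)/h)·(τ(u) − τ(z))·f(u) du = h²·(∫ t²K(t)dt)·( τ′(z)f′(z) + (1/2)τ″(z)f(z) ) + o(h²) as h → 0⁺. -/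
/-!
With `g u = (τ u - τ z) * f u` the integrand is `K t * g (z + h * t)`, where `g z = 0`,
`g' z = τ' z * f z` and `g'' z = τ'' z * f z + 2 * τ' z * f' z`. Integrating the second-order
Taylor expansion of `g` at `z` against `K` gives
`h * g' z * ∫ t K + h ^ 2 * g'' z / 2 * ∫ t ^ 2 K + o(h ^ 2)`, and the first moment vanishes.
The `o(s ^ 2)` Taylor remainder integrates to `o(h ^ 2)` because `K` is integrable with
compact support, so only arguments `s = h * t` with `t` in that support are seen.
-/

open MeasureTheory Filter Asymptotics Metric Set Topology
open scoped ContDiff ENat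

section Smooth

variable {𝕜 F : Type*} [NontriviallyNormedField 𝕜] [NormedAddCommGroup F] [NormedSpace 𝕜 F]
  {f : 𝕜 → F} {x : 𝕜} {n : WithTop ℕ∞}

theorem ContDiffAt.eventually_differentiableAt (h : ContDiffAt 𝕜 n f x) (hn : 1 ≤ n)
    (hn' : n ≠ ∞) : ∀ᶠ y in 𝓝 x, DifferentiableAt 𝕜 f y :=
  (h.eventually hn').mono fun _ hy => hy.differentiableAt (zero_lt_one.trans_le hn).ne'

theorem ContDiffAt.differentiableAt_deriv (h : ContDiffAt 𝕜 n f x) (hn : 2 ≤ n) :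
    DifferentiableAt 𝕜 (deriv f) x :=
  (h.derivWithin (m := 1) hn).differentiableAt one_ne_zero

end Smooth

theorem ContDiffAt.isLittleO_sub_taylor_two {E : Type*} [NormedAddCommGroup E] [NormedSpace ℝ E]
    {g : ℝ → E} {z : ℝ} (hg : ContDiffAt ℝ 2 g z) :
    (fun u => g u - g z - (u - z) • deriv g z - ((u - z) ^ 2 / 2) • deriv (deriv g) z)
      =o[𝓝 z] fun u => (u - z) ^ 2 := by
  obtain ⟨r, hr, hdiff⟩ :=
    eventually_nhds_iff_ball.1 (hg.eventually_differentiableAt one_le_two (by simp))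
  have hderiv : ∀ u ∈ ball z r, HasDerivWithinAt
      (fun u => g u - g z - (u - z) • deriv g z - ((u - z) ^ 2 / 2) • deriv (deriv g) z)
      (deriv g u - deriv g z - (u - z) • deriv (deriv g) z) (ball z r) u := by
    intro u hu
    have hφ := (((hdiff u hu).hasDerivAt.sub_const (g z)).sub
      (((hasDerivAt_id u).sub_const z).smul_const (deriv g z))).sub
      ((((hasDerivAt_id u).sub_const z).pow 2).div_const 2 |>.smul_const (deriv (deriv g) z))
    refine (hφ.congr_deriv ?_).hasDerivWithinAt
    simp
  have hsmall : (fun u => deriv g u - deriv g z - (u - z) • deriv (deriv g) z)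
      =o[𝓝[ball z r] z] fun u => (u - z) ^ 1 := by
    simpa using (hasDerivAt_iff_isLittleO.1 (hg.differentiableAt_deriv le_rfl).hasDerivAt).mono
      nhdsWithin_le_nhds
  have hrem := (convex_ball z r).isLittleO_pow_succ_real (mem_ball_self hr) hderiv hsmall
  rw [nhdsWithin_eq_nhds.2 (ball_mem_nhds z hr)] at hrem
  simpa using hrem

theorem deriv_deriv_mul {𝕜 : Type*} [NontriviallyNormedField 𝕜] {φ ψ : 𝕜 → 𝕜} {z : 𝕜}
    (hφ : ContDiffAt 𝕜 2 φ z) (hψ : ContDiffAt 𝕜 2 ψ z) :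
    deriv (deriv fun u => φ u * ψ u) z
      = deriv (deriv φ) z * ψ z + 2 * (deriv φ z * deriv ψ z) + φ z * deriv (deriv ψ) z := by
  have hφ₁ := hφ.eventually_differentiableAt one_le_two (by simp)
  have hψ₁ := hψ.eventually_differentiableAt one_le_two (by simp)
  have hderiv : deriv (fun u => φ u * ψ u) =ᶠ[𝓝 z] deriv φ * ψ + φ * deriv ψ := by
    filter_upwards [hφ₁, hψ₁] with u h1 h2 using deriv_mul h1 h2
  have hφ₂ := (hφ.differentiableAt_deriv le_rfl).hasDerivAt
  have hψ₂ := (hψ.differentiableAt_deriv le_rfl).hasDerivAt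
  rw [hderiv.deriv_eq, ((hφ₂.mul hψ₁.self_of_nhds.hasDerivAt).add
    (hφ₁.self_of_nhds.hasDerivAt.mul hψ₂)).deriv]
  ring

theorem HasCompactSupport.integrable_of_bound {X E : Type*} [TopologicalSpace X]
    [MeasurableSpace X] [OpensMeasurableSpace X] {μ : Measure X} [IsFiniteMeasureOnCompacts μ]
    [NormedAddCommGroup E] {K : X → E} (hKm : AEStronglyMeasurable K μ) (hKb : ∃ C, ∀ x, ‖K x‖ ≤ C)
    (hKsupp : HasCompactSupport K) : Integrable K μ := by
  obtain ⟨C, hC⟩ := hKb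
  rw [← integrableOn_iff_integrable_of_support_subset (subset_tsupport K)]
  exact Measure.integrableOn_of_bounded hKsupp.isCompact.measure_lt_top.ne hKm
    (Eventually.of_forall hC)

section Kernel

variable {K : ℝ → ℝ}

theorem HasCompactSupport.integrable_mul_of_continuousOn (hK : Integrable K)
    (hKsupp : HasCompactSupport K) {c : ℝ → ℝ} (hc : ContinuousOn c (tsupport K)) :
    Integrable fun t => K t * c t := by
  rw [← integrableOn_iff_integrable_of_support_subset
    ((Function.support_mul_subset_left K c).trans (subset_tsupport K))]
  exact hK.integrableOn.mul_continuousOn hc hKsupp.isCompact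

theorem HasCompactSupport.eventually_forall_mul_mem (hKsupp : HasCompactSupport K) {U : Set ℝ}
    (hU : U ∈ 𝓝 0) : ∀ᶠ h in 𝓝 (0 : ℝ), ∀ t ∈ tsupport K, h * t ∈ U :=
  hKsupp.isCompact.eventually_forall_of_forall_eventually fun t _ =>
    (continuous_mul.tendsto (0, t)).eventually (by simpa using hU)

theorem HasCompactSupport.isLittleO_integral_mul_comp_mul (hK : Integrable K)
    (hKsupp : HasCompactSupport K) {R : ℝ → ℝ} (hR : R =o[𝓝 0] fun s => s ^ 2) :
    (fun h => ∫ t, K t * R (h * t)) =o[𝓝 0] fun h => h ^ 2 := by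
  have hmoment : Integrable fun t => |K t * t ^ 2| :=
    (hKsupp.integrable_mul_of_continuousOn hK (by fun_prop)).abs
  set C := ∫ t, |K t * t ^ 2|
  have hC : 0 ≤ C := integral_nonneg fun t => abs_nonneg _
  refine isLittleO_iff.2 fun c hc => ?_
  have hc' : 0 < c / (C + 1) := by positivity
  filter_upwards [hKsupp.eventually_forall_mul_mem (isLittleO_iff.1 hR hc')] with h hh
  have hpoint : ∀ t, ‖K t * R (h * t)‖ ≤ c / (C + 1) * h ^ 2 * |K t * t ^ 2| := by
    intro t
    by_cases ht : t ∈ tsupport K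
    · have hRt : ‖R (h * t)‖ ≤ c / (C + 1) * ‖(h * t) ^ 2‖ := hh t ht
      rw [norm_mul, Real.norm_eq_abs, abs_mul]
      calc |K t| * ‖R (h * t)‖ ≤ |K t| * (c / (C + 1) * ‖(h * t) ^ 2‖) := by gcongr
        _ = c / (C + 1) * h ^ 2 * (|K t| * |t ^ 2|) := by
          rw [Real.norm_eq_abs, abs_of_nonneg (sq_nonneg (h * t)), abs_of_nonneg (sq_nonneg t)]
          ring
    · simp [image_eq_zero_of_notMem_tsupport ht]
  calc ‖∫ t, K t * R (h * t)‖ ≤ ∫ t, c / (C + 1) * h ^ 2 * |K t * t ^ 2| :=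
        norm_integral_le_of_norm_le (hmoment.const_mul _) (Eventually.of_forall hpoint)
    _ = c / (C + 1) * C * h ^ 2 := by rw [integral_const_mul]; ring
    _ ≤ c * ‖h ^ 2‖ := by
      rw [Real.norm_eq_abs, abs_of_nonneg (sq_nonneg h)]
      gcongr
      exact (mul_le_mul_of_nonneg_left (by linarith) hc'.le).trans_eq
        (div_mul_cancel₀ _ (by positivity))

theorem HasCompactSupport.isLittleO_integral_mul_comp_sub_taylor_two (hK : Integrable K) (hKsupp : HasCompactSupport K) {g : ℝ → ℝ} {z : ℝ}
    (hg : ContDiffAt ℝ 2 g z) :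
    (fun h => (∫ t, K t * g (z + h * t)) - (g z * (∫ t, K t) + h * deriv g z * (∫ t, t * K t)
        + h ^ 2 * (deriv (deriv g) z / 2) * ∫ t, t ^ 2 * K t)) =o[𝓝 0] fun h => h ^ 2 := by
  have hshift : Tendsto (fun s : ℝ => z + s) (𝓝 0) (𝓝 z) := by
    simpa using (continuous_const_add z).tendsto 0
  have hR : (fun s => g (z + s) - g z - s * deriv g z - s ^ 2 / 2 * deriv (deriv g) z)
      =o[𝓝 0] fun s => s ^ 2 := by
    simpa [Function.comp_def] using hg.isLittleO_sub_taylor_two.comp_tendsto hshift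
  refine (hKsupp.isLittleO_integral_mul_comp_mul hK hR).congr' ?_ EventuallyEq.rfl
  have hcont : ∀ᶠ s in 𝓝 (0 : ℝ), ContinuousAt g (z + s) :=
    hshift.eventually ((hg.eventually (by simp)).mono fun u hu => hu.continuousAt)
  filter_upwards [hKsupp.eventually_forall_mul_mem hcont] with h hh
  have hint : Integrable fun t => K t * g (z + h * t) :=
    hKsupp.integrable_mul_of_continuousOn hK fun t ht =>
      ((hh t ht).comp (f := fun t => z + h * t) (by fun_prop)).continuousWithinAt
  have hmoment : ∀ n : ℕ, Integrable fun t => t ^ n * K t := fun n => by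
    simpa only [mul_comm] using hKsupp.integrable_mul_of_continuousOn hK
      (c := fun t => t ^ n) (by fun_prop)
  have h0 := hK.const_mul (g z)
  have h1 : Integrable fun t => h * deriv g z * (t * K t) := by
    simpa only [pow_one] using (hmoment 1).const_mul (h * deriv g z)
  have h2 := (hmoment 2).const_mul (h ^ 2 * (deriv (deriv g) z / 2))
  rw [← integral_const_mul, ← integral_const_mul, ← integral_const_mul, ← integral_add h0 h1,
    ← integral_add (by exact h0.add h1) h2, ← integral_sub hint (by exact (h0.add h1).add h2)]
  congr 1 with t
  ring

end Kernel

theorem second_order_kernel_bias_expansion_general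
    (K τ f : ℝ → ℝ) (z : ℝ)
    (hKm : Measurable K) (hKb : ∃ C, ∀ t, |K t| ≤ C) (hKsupp : HasCompactSupport K)
    (hK0 : ∫ t, t * K t = 0)
    (hτ : ContDiffAt ℝ 2 τ z) (hf : ContDiffAt ℝ 2 f z) :
    Tendsto (fun h : ℝ => h⁻¹ ^ 2 * ∫ t, K t * (τ (z + h * t) - τ z) * f (z + h * t))
      (nhdsWithin 0 (Set.Ioi 0))
      (nhds ((∫ t, t ^ 2 * K t)
        * (deriv τ z * deriv f z + (1 / 2) * deriv (deriv τ) z * f z))) := by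
  have hK : Integrable K := hKsupp.integrable_of_bound hKm.aestronglyMeasurable hKb
  have hτ' : ContDiffAt ℝ 2 (fun u => τ u - τ z) z := hτ.sub contDiffAt_const
  have hexp :=
    (hKsupp.isLittleO_integral_mul_comp_sub_taylor_two hK (hτ'.mul hf)).tendsto_div_nhds_zero
  rw [deriv_deriv_mul hτ' hf] at hexp
  simp only [deriv_sub_const_fun, sub_self, zero_mul, add_zero, hK0, mul_zero] at hexp
  have hlim := (hexp.mono_left (nhdsWithin_le_nhds (s := Ioi 0))).add_const
    ((∫ t, t ^ 2 * K t) * (deriv τ z * deriv f z + (1 / 2) * deriv (deriv τ) z * f z))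
  rw [zero_add] at hlim
  refine hlim.congr' ?_
  filter_upwards [self_mem_nhdsWithin] with h (hh : 0 < h)
  simp only [mul_assoc]
  field_simp
  ring

/-- Second-order kernel bias expansion:
`lim_{h→0⁺} h⁻² ∫ K(t)(τ(z + ht) − τ(z)) f(z + ht) dt
  = (∫ t² K(t) dt) (τ′(z) f′(z) + (1/2) τ″(z) f(z))`,
for a bounded, compactly supported kernel `K` with `∫K = 1` and `∫ tK(t) dt = 0`, and `τ`,
`f` twice continuously differentiable in a neighborhood of `z`, with `f` bounded. -/
theorem second_order_kernel_bias_expansion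
    (K τ f : ℝ → ℝ) (z : ℝ)
    (hKm : Measurable K) (hKb : ∃ C, ∀ t, |K t| ≤ C) (hKsupp : HasCompactSupport K)
    (hK1 : ∫ t, K t = 1) (hK0 : ∫ t, t * K t = 0)
    (hτ : ContDiffAt ℝ 2 τ z) (hf : ContDiffAt ℝ 2 f z)
    (hfb : ∃ C, ∀ x, |f x| ≤ C) :
    Tendsto (fun h : ℝ => h⁻¹ ^ 2 * ∫ t, K t * (τ (z + h * t) - τ z) * f (z + h * t))
      (nhdsWithin 0 (Set.Ioi 0))
      (nhds ((∫ t, t ^ 2 * K t)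
        * (deriv τ z * deriv f z + (1 / 2) * deriv (deriv τ) z * f z))) :=
  second_order_kernel_bias_expansion_general K τ f z hKm hKb hKsupp hK0 hτ hf
end
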